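/- arXiv:2604.12355 — 6 statements merged into one kernel-verified Lean document; each statement's English description precedes it below -/
import Mathlib

section
/- Let (A,B,P,Q,μ,ν) be a graded Morita context with idempotent graded rings, unital bimodules and surjective trace maps, and U a unital graded left A-module. Then the map η : (B·HOM_A(P,A)) ⊗_A U → B·HOM_A(P,U), η(f⊗u)(p) = f(p)·u, is a surjective graded left B-module homomorphism of degree e whose kernel is left B-torsion. -/
/-!
Common infrastructure: non-unital (graded) rings, non-unital graded modules
(given by explicit action functions), graded homomorphisms of all degrees,
traces, torsion submodules, balanced tensor products, and graded Morita
contexts, following Dokuchaev–Simón, "Graded Equivalence for Graded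
Idempotent Rings".
-/

open DirectSum

section CommonDefs

variable {Γ : Type*} [Group Γ] {A B M N P Q : Type*}

/-- `M` is a left module over the non-unital ring `A` via the action `s`. -/
structure IsLMod (A M : Type*) [NonUnitalRing A] [AddCommGroup M] (s : A → M → M) : Prop where
  smul_add : ∀ (a : A) (m n : M), s a (m + n) = s a m + s a n
  add_smul : ∀ (a b : A) (m : M), s (a + b) m = s a m + s b m
  mul_smul : ∀ (a b : A) (m : M), s (a * b) m = s a (s b m)

/-- `M` is a right module over the non-unital ring `B` via the action `s`. -/
structure IsRMod (B M : Type*) [NonUnitalRing B] [AddCommGroup M] (s : M → B → M) : Prop where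
  add_smul : ∀ (m n : M) (b : B), s (m + n) b = s m b + s n b
  smul_add : ∀ (m : M) (a b : B), s m (a + b) = s m a + s m b
  smul_mul : ∀ (m : M) (a b : B), s m (a * b) = s (s m a) b

/-- The ring `A` is idempotent: `A² = A`. -/
def IsIdem (A : Type*) [NonUnitalRing A] : Prop :=
  ∀ a : A, a ∈ AddSubgroup.closure {x : A | ∃ y z : A, x = y * z}

/-- The left `A`-module with action `s` is unital: `AM = M`. -/
def IsUnitalL [NonUnitalRing A] [AddCommGroup M] (s : A → M → M) : Prop :=
  ∀ m : M, m ∈ AddSubgroup.closure {x : M | ∃ (a : A) (m' : M), x = s a m'}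

/-- The right `B`-module with action `s` is unital: `MB = M`. -/
def IsUnitalR [NonUnitalRing B] [AddCommGroup M] (s : M → B → M) : Prop :=
  ∀ m : M, m ∈ AddSubgroup.closure {x : M | ∃ (m' : M) (b : B), x = s m' b}

/-- The left `A`-module with action `s` is torsion-free: `Am = 0 → m = 0`. -/
def IsTorsionFreeL [NonUnitalRing A] [AddCommGroup M] (s : A → M → M) : Prop :=
  ∀ m : M, (∀ a : A, s a m = 0) → m = 0

/-- The right `B`-module with action `s` is torsion-free. -/
def IsTorsionFreeR [NonUnitalRing B] [AddCommGroup M] (s : M → B → M) : Prop :=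
  ∀ m : M, (∀ b : B, s m b = 0) → m = 0

/-- The family `𝒜` makes `A` a `Γ`-graded ring (multiplicativity of the grading;
the direct sum decomposition is recorded by a `DirectSum.Decomposition` instance). -/
def IsGRing [NonUnitalRing A] (𝒜 : Γ → AddSubgroup A) : Prop :=
  ∀ ⦃σ τ : Γ⦄ ⦃a b : A⦄, a ∈ 𝒜 σ → b ∈ 𝒜 τ → a * b ∈ 𝒜 (σ * τ)

/-- Grading compatibility for a left module: `A_σ · M_τ ⊆ M_{στ}`. -/
def IsGModL [NonUnitalRing A] [AddCommGroup M] (𝒜 : Γ → AddSubgroup A)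
    (ℳ : Γ → AddSubgroup M) (s : A → M → M) : Prop :=
  ∀ ⦃σ τ : Γ⦄ ⦃a : A⦄ ⦃m : M⦄, a ∈ 𝒜 σ → m ∈ ℳ τ → s a m ∈ ℳ (σ * τ)

/-- Grading compatibility for a right module: `M_τ · B_σ ⊆ M_{τσ}`. -/
def IsGModR [NonUnitalRing B] [AddCommGroup M] (ℬ : Γ → AddSubgroup B)
    (ℳ : Γ → AddSubgroup M) (s : M → B → M) : Prop :=
  ∀ ⦃σ τ : Γ⦄ ⦃m : M⦄ ⦃b : B⦄, m ∈ ℳ τ → b ∈ ℬ σ → s m b ∈ ℳ (τ * σ)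

/-- `f : M → N` is a homomorphism of left `A`-modules. -/
def IsLinL [NonUnitalRing A] [AddCommGroup M] [AddCommGroup N]
    (sM : A → M → M) (sN : A → N → N) (f : M →+ N) : Prop :=
  ∀ (a : A) (m : M), f (sM a m) = sN a (f m)

/-- `f : M → N` is a homomorphism of right `B`-modules. -/
def IsLinR [NonUnitalRing B] [AddCommGroup M] [AddCommGroup N]
    (sM : M → B → M) (sN : N → B → N) (f : M →+ N) : Prop :=
  ∀ (m : M) (b : B), f (sM m b) = sN (f m) b

/-- `f` is a graded homomorphism of degree `σ` (left module convention):
`f(M_τ) ⊆ N_{τσ}`. -/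
def IsDegL [AddCommGroup M] [AddCommGroup N] (ℳ : Γ → AddSubgroup M)
    (𝒩 : Γ → AddSubgroup N) (σ : Γ) (f : M →+ N) : Prop :=
  ∀ τ : Γ, ∀ m ∈ ℳ τ, f m ∈ 𝒩 (τ * σ)

/-- `f` is a graded homomorphism of degree `σ` (right module convention):
`f(M_τ) ⊆ N_{στ}`. -/
def IsDegR [AddCommGroup M] [AddCommGroup N] (ℳ : Γ → AddSubgroup M)
    (𝒩 : Γ → AddSubgroup N) (σ : Γ) (f : M →+ N) : Prop :=
  ∀ τ : Γ, ∀ m ∈ ℳ τ, f m ∈ 𝒩 (σ * τ)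

/-- `HOM_A(M,N)`: the additive group of graded left `A`-module homomorphisms
of all degrees (i.e. sums of homogeneous `A`-linear maps). -/
def HOML [NonUnitalRing A] [AddCommGroup M] [AddCommGroup N]
    (sM : A → M → M) (sN : A → N → N)
    (ℳ : Γ → AddSubgroup M) (𝒩 : Γ → AddSubgroup N) : AddSubgroup (M →+ N) :=
  AddSubgroup.closure {f | IsLinL sM sN f ∧ ∃ σ : Γ, IsDegL ℳ 𝒩 σ f}

/-- `HOM_B(M,N)` for right modules. -/
def HOMR [NonUnitalRing B] [AddCommGroup M] [AddCommGroup N]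
    (sM : M → B → M) (sN : N → B → N)
    (ℳ : Γ → AddSubgroup M) (𝒩 : Γ → AddSubgroup N) : AddSubgroup (M →+ N) :=
  AddSubgroup.closure {f | IsLinR sM sN f ∧ ∃ σ : Γ, IsDegR ℳ 𝒩 σ f}

/-- Given a subgroup `H` of homomorphisms `M →+ N` and a `C`-action on `M`
(`tw`), this is the subgroup `C·H` generated by the twisted maps
`c·f = f ∘ (tw c)`.  It models e.g. `B·HOM_A(P,N)` with `(b·f)(p) = f(pb)`. -/
def smulHOM [AddCommGroup M] [AddCommGroup N] (C : Type*)
    (H : AddSubgroup (M →+ N)) (tw : C → M → M) : AddSubgroup (M →+ N) :=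
  AddSubgroup.closure {g | ∃ (c : C) (f : M →+ N), f ∈ H ∧ ∀ m : M, g m = f (tw c m)}

/-- The graded trace `Tr_M(P)`: the additive subgroup of `M` generated by the
images of all graded homomorphisms `P → M` of arbitrary degree. -/
def TraceL [NonUnitalRing A] [AddCommGroup P] [AddCommGroup M]
    (sP : A → P → P) (sM : A → M → M)
    (𝓟 : Γ → AddSubgroup P) (ℳ : Γ → AddSubgroup M) : AddSubgroup M :=
  AddSubgroup.closure {x | ∃ f ∈ HOML sP sM 𝓟 ℳ, ∃ p : P, x = f p}

/-- The torsion part `t_A(M) = {m ∈ M | A·m = 0}`, as an additive subgroup. -/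
def torsionL [NonUnitalRing A] [AddCommGroup M] {s : A → M → M}
    (hM : IsLMod A M s) : AddSubgroup M where
  carrier := {m : M | ∀ a : A, s a m = 0}
  zero_mem' := by
    intro a
    have h := hM.smul_add a 0 0
    rw [add_zero] at h
    exact left_eq_add.mp h
  add_mem' := by
    intro m n hm hn a
    rw [hM.smul_add, hm a, hn a, add_zero]
  neg_mem' := by
    intro m hm a
    have h0 : s a (0 : M) = 0 := by
      have h := hM.smul_add a 0 0
      rw [add_zero] at h
      exact left_eq_add.mp h
    have h := hM.smul_add a m (-m)
    rw [add_neg_cancel, h0, hm a, zero_add] at h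
    exact h.symm

end CommonDefs

section Tensor

variable (B : Type*) {P Q : Type*} [AddCommGroup P] [AddCommGroup Q]

/-- Relations defining the balanced tensor product `P ⊗_B Q` of a right
`B`-module `P` (action `rs`) and a left `B`-module `Q` (action `ls`). -/
def TenRel (rs : P → B → P) (ls : B → Q → Q) : AddSubgroup (FreeAbelianGroup (P × Q)) :=
  AddSubgroup.closure
    ({x | ∃ (p p' : P) (q : Q), x = FreeAbelianGroup.of (p + p', q) -
        FreeAbelianGroup.of (p, q) - FreeAbelianGroup.of (p', q)} ∪
     {x | ∃ (p : P) (q q' : Q), x = FreeAbelianGroup.of (p, q + q') -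
        FreeAbelianGroup.of (p, q) - FreeAbelianGroup.of (p, q')} ∪
     {x | ∃ (p : P) (b : B) (q : Q), x = FreeAbelianGroup.of (rs p b, q) -
        FreeAbelianGroup.of (p, ls b q)})

/-- The balanced tensor product `P ⊗_B Q`. -/
abbrev Ten (rs : P → B → P) (ls : B → Q → Q) : Type _ :=
  FreeAbelianGroup (P × Q) ⧸ TenRel B rs ls

/-- The elementary tensor `p ⊗ q`. -/
def tmul {B : Type*} {rs : P → B → P} {ls : B → Q → Q} (p : P) (q : Q) :
    Ten B rs ls :=
  QuotientAddGroup.mk (FreeAbelianGroup.of (p, q))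

/-- The natural grading of the tensor product: the `ρ`-component is generated
by the `p ⊗ q` with `p, q` homogeneous of degrees multiplying to `ρ`. -/
def TenGr {Γ : Type*} [Group Γ] {B : Type*} {rs : P → B → P} {ls : B → Q → Q}
    (𝓟 : Γ → AddSubgroup P) (𝒬 : Γ → AddSubgroup Q) (ρ : Γ) :
    AddSubgroup (Ten B rs ls) :=
  AddSubgroup.closure
    {x | ∃ (σ τ : Γ) (p : P) (q : Q), p ∈ 𝓟 σ ∧ q ∈ 𝒬 τ ∧ σ * τ = ρ ∧ x = tmul p q}

end Tensor

section Morita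

/-- A graded Morita context `(A, B, P, Q, μ, ν)` between idempotent graded
rings, with the trace maps given by the balanced pairings
`pr = ⟨-,-⟩ : P × Q → A` and `br = [-,-] : Q × P → B`, both surjective. -/
structure GMoritaCtx (Γ : Type*) [Group Γ] (A B P Q : Type*)
    [NonUnitalRing A] [NonUnitalRing B] [AddCommGroup P] [AddCommGroup Q]
    (𝒜 : Γ → AddSubgroup A) (ℬ : Γ → AddSubgroup B)
    (𝓟 : Γ → AddSubgroup P) (𝒬 : Γ → AddSubgroup Q)
    (ap : A → P → P) (pb : P → B → P) (bq : B → Q → Q) (qa : Q → A → Q)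
    (pr : P → Q → A) (br : Q → P → B) : Prop where
  gradeA : IsGRing 𝒜
  gradeB : IsGRing ℬ
  idemA : IsIdem A
  idemB : IsIdem B
  lmodP : IsLMod A P ap
  rmodP : IsRMod B P pb
  bimodP : ∀ (a : A) (p : P) (b : B), pb (ap a p) b = ap a (pb p b)
  lmodQ : IsLMod B Q bq
  rmodQ : IsRMod A Q qa
  bimodQ : ∀ (b : B) (q : Q) (a : A), qa (bq b q) a = bq b (qa q a)
  unitalPl : IsUnitalL ap
  unitalPr : IsUnitalR pb
  unitalQl : IsUnitalL bq
  unitalQr : IsUnitalR qa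
  gradePl : IsGModL 𝒜 𝓟 ap
  gradePr : IsGModR ℬ 𝓟 pb
  gradeQl : IsGModL ℬ 𝒬 bq
  gradeQr : IsGModR 𝒜 𝒬 qa
  pr_addl : ∀ (p p' : P) (q : Q), pr (p + p') q = pr p q + pr p' q
  pr_addr : ∀ (p : P) (q q' : Q), pr p (q + q') = pr p q + pr p q'
  br_addl : ∀ (q q' : Q) (p : P), br (q + q') p = br q p + br q' p
  br_addr : ∀ (q : Q) (p p' : P), br q (p + p') = br q p + br q p'
  pr_bal : ∀ (p : P) (b : B) (q : Q), pr (pb p b) q = pr p (bq b q)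
  br_bal : ∀ (q : Q) (a : A) (p : P), br (qa q a) p = br q (ap a p)
  pr_linl : ∀ (a : A) (p : P) (q : Q), pr (ap a p) q = a * pr p q
  pr_linr : ∀ (p : P) (q : Q) (a : A), pr p (qa q a) = pr p q * a
  br_linl : ∀ (b : B) (q : Q) (p : P), br (bq b q) p = b * br q p
  br_linr : ∀ (q : Q) (p : P) (b : B), br q (pb p b) = br q p * b
  pr_graded : ∀ ⦃σ τ : Γ⦄ ⦃p : P⦄ ⦃q : Q⦄, p ∈ 𝓟 σ → q ∈ 𝒬 τ → pr p q ∈ 𝒜 (σ * τ)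
  br_graded : ∀ ⦃σ τ : Γ⦄ ⦃q : Q⦄ ⦃p : P⦄, q ∈ 𝒬 σ → p ∈ 𝓟 τ → br q p ∈ ℬ (σ * τ)
  assoc1 : ∀ (p' : P) (q : Q) (p : P), pb p' (br q p) = ap (pr p' q) p
  assoc2 : ∀ (q' : Q) (p : P) (q : Q), qa q' (pr p q) = bq (br q' p) q
  sur_pr : ∀ a : A, a ∈ AddSubgroup.closure {x : A | ∃ (p : P) (q : Q), x = pr p q}
  sur_br : ∀ b : B, b ∈ AddSubgroup.closure {x : B | ∃ (q : Q) (p : P), x = br q p}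

end Morita

universe u v

section AuxTen

variable {B' : Type*} {P' Q' : Type*} [AddCommGroup P'] [AddCommGroup Q']
  {rs : P' → B' → P'} {ls : B' → Q' → Q'}

lemma tmul_add_left' (p p' : P') (q : Q') :
    tmul (rs := rs) (ls := ls) (p + p') q = tmul p q + tmul p' q := by
  show QuotientAddGroup.mk _ = QuotientAddGroup.mk (_ + _)
  rw [QuotientAddGroup.eq]
  have h : FreeAbelianGroup.of (p + p', q) - FreeAbelianGroup.of (p, q)
      - FreeAbelianGroup.of (p', q) ∈ TenRel B' rs ls :=
    AddSubgroup.subset_closure (Or.inl (Or.inl ⟨p, p', q, rfl⟩))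
  convert neg_mem h using 1
  abel

lemma tmul_add_right' (p : P') (q q' : Q') :
    tmul (rs := rs) (ls := ls) p (q + q') = tmul p q + tmul p q' := by
  show QuotientAddGroup.mk _ = QuotientAddGroup.mk (_ + _)
  rw [QuotientAddGroup.eq]
  have h : FreeAbelianGroup.of (p, q + q') - FreeAbelianGroup.of (p, q)
      - FreeAbelianGroup.of (p, q') ∈ TenRel B' rs ls :=
    AddSubgroup.subset_closure (Or.inl (Or.inr ⟨p, q, q', rfl⟩))
  convert neg_mem h using 1
  abel

lemma tmul_balance' (p : P') (b : B') (q : Q') :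
    tmul (rs := rs) (ls := ls) (rs p b) q = tmul p (ls b q) := by
  show QuotientAddGroup.mk _ = QuotientAddGroup.mk _
  rw [QuotientAddGroup.eq]
  have h : FreeAbelianGroup.of (rs p b, q) - FreeAbelianGroup.of (p, ls b q)
      ∈ TenRel B' rs ls :=
    AddSubgroup.subset_closure (Or.inr ⟨p, b, q, rfl⟩)
  convert neg_mem h using 1
  abel

lemma ten_ind (C : AddSubgroup (Ten B' rs ls))
    (h : ∀ (p : P') (q : Q'), tmul (rs := rs) (ls := ls) p q ∈ C) :
    ∀ t, t ∈ C := by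
  intro t
  induction t using QuotientAddGroup.induction_on with
  | H x =>
    induction x using FreeAbelianGroup.induction_on with
    | zero => exact zero_mem C
    | of z => exact h z.1 z.2
    | neg z hz => exact neg_mem hz
    | add y z hy hz =>
      have e : ((QuotientAddGroup.mk (y + z)) : Ten B' rs ls)
          = QuotientAddGroup.mk y + QuotientAddGroup.mk z := rfl
      rw [e]; exact add_mem hy hz

lemma tmul_zero_right' (p : P') : tmul (rs := rs) (ls := ls) p (0 : Q') = 0 := by
  have h := tmul_add_right' (rs := rs) (ls := ls) p 0 0
  rw [add_zero] at h
  exact (left_eq_add.mp h)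

end AuxTen

section AuxHoms

variable {Γ' : Type*} [Group Γ']

/-- The subgroup of `A`-linear maps. -/
def linSub (A M N : Type*) [NonUnitalRing A] [AddCommGroup M] [AddCommGroup N]
    (sM : A → M → M) (sN : A → N → N)
    (hadd : ∀ (a : A) (x y : N), sN a (x + y) = sN a x + sN a y) :
    AddSubgroup (M →+ N) where
  carrier := {f | IsLinL sM sN f}
  zero_mem' := by
    intro a m
    have h0 : sN a 0 = 0 := by
      have h := hadd a 0 0; rw [add_zero] at h; exact (left_eq_add.mp h)
    simpa using h0.symm
  add_mem' := by
    intro f g hf hg a m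
    simp only [AddMonoidHom.add_apply, hf a m, hg a m, hadd]
  neg_mem' := by
    intro f hf a m
    have h0 : sN a 0 = 0 := by
      have h := hadd a 0 0; rw [add_zero] at h; exact (left_eq_add.mp h)
    simp only [AddMonoidHom.neg_apply]
    rw [hf a m]
    have h2 : sN a (f m) + sN a (-(f m)) = 0 := by
      rw [← hadd, add_neg_cancel, h0]
    exact neg_eq_of_add_eq_zero_left (by rw [add_comm] at h2; exact h2)

lemma HOML_lin {A M N : Type*} [NonUnitalRing A] [AddCommGroup M] [AddCommGroup N]
    {sM : A → M → M} {sN : A → N → N}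
    {ℳ : Γ' → AddSubgroup M} {𝒩 : Γ' → AddSubgroup N}
    (hadd : ∀ (a : A) (x y : N), sN a (x + y) = sN a x + sN a y)
    {f : M →+ N} (hf : f ∈ HOML sM sN ℳ 𝒩) : IsLinL sM sN f :=
  (AddSubgroup.closure_le (linSub A M N sM sN hadd)).mpr (fun _ hg => hg.1) hf

def Phi {A P U : Type*} [NonUnitalRing A] [AddCommGroup P] [AddCommGroup U]
    (sU : A → U → U)
    (hadd : ∀ (a b : A) (u : U), sU (a + b) u = sU a u + sU b u)
    (u : U) : (P →+ A) →+ (P →+ U) :=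
  AddMonoidHom.mk' (fun g => AddMonoidHom.mk' (fun p => sU (g p) u)
      (fun p p' => by show sU (g (p + p')) u = sU (g p) u + sU (g p') u; rw [map_add, hadd]))
    (fun g g' => by ext p; exact hadd (g p) (g' p) u)

@[simp] lemma Phi_apply {A P U : Type*} [NonUnitalRing A] [AddCommGroup P] [AddCommGroup U]
    (sU : A → U → U) (hadd) (u : U) (g : P →+ A) (p : P) :
    Phi sU hadd u g p = sU (g p) u := rfl

def PhiU {A P U : Type*} [NonUnitalRing A] [AddCommGroup P] [AddCommGroup U]
    (sU : A → U → U)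
    (hadd : ∀ (a b : A) (u : U), sU (a + b) u = sU a u + sU b u)
    (hadd2 : ∀ (a : A) (u v : U), sU a (u + v) = sU a u + sU a v)
    (g : P →+ A) : U →+ (P →+ U) :=
  AddMonoidHom.mk' (fun u => Phi sU hadd u g)
    (fun u v => by ext p; exact hadd2 (g p) u v)

def FqHom {P Q A : Type*} [AddCommGroup P] [AddCommGroup Q] [NonUnitalRing A]
    (pr : P → Q → A)
    (h1 : ∀ (p p' : P) (q : Q), pr (p + p') q = pr p q + pr p' q)
    (h2 : ∀ (p : P) (q q' : Q), pr p (q + q') = pr p q + pr p q') :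
    Q →+ (P →+ A) :=
  AddMonoidHom.mk' (fun q => AddMonoidHom.mk' (fun p => pr p q) (fun p p' => h1 p p' q))
    (fun q q' => by ext p; exact h2 p q q')

def TwHom {P B : Type*} [AddCommGroup P] (pb : P → B → P) (b : B)
    (h : ∀ p p', pb (p + p') b = pb p b + pb p' b) : P →+ P :=
  AddMonoidHom.mk' (fun p => pb p b) h

def preComp {P U : Type*} [AddCommGroup P] [AddCommGroup U] (e : P →+ P) :
    (P →+ U) →+ (P →+ U) :=
  AddMonoidHom.mk' (fun φ => φ.comp e) (fun φ ψ => by ext p; rfl)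

def ThetaHom {P B U : Type*} [AddCommGroup P] [NonUnitalRing B] [AddCommGroup U]
    (pb : P → B → P) (h : P →+ U)
    (h1 : ∀ (p p' : P) (b : B), pb (p + p') b = pb p b + pb p' b)
    (h2 : ∀ (p : P) (b b' : B), pb p (b + b') = pb p b + pb p b') :
    B →+ (P →+ U) :=
  AddMonoidHom.mk' (fun b => h.comp (TwHom pb b (fun p p' => h1 p p' b)))
    (fun b b' => by
      ext p
      show h (pb p (b + b')) = h (pb p b) + h (pb p b')
      rw [h2, map_add])

@[simp] lemma ThetaHom_apply {P B U : Type*} [AddCommGroup P] [NonUnitalRing B] [AddCommGroup U]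
    (pb : P → B → P) (h : P →+ U) (h1) (h2) (b : B) (p : P) :
    ThetaHom pb h h1 h2 b p = h (pb p b) := rfl

def kerSet {G X : Type*} [AddGroup G] [AddCommGroup X] (F : G → X)
    (h0 : F 0 = 0) (hadd : ∀ a b, F (a + b) = F a + F b) : AddSubgroup G where
  carrier := {g | F g = 0}
  zero_mem' := h0
  add_mem' := by
    intro a b ha hb
    show F (a + b) = 0
    rw [hadd, ha, hb, add_zero]
  neg_mem' := by
    intro a ha
    show F (-a) = 0
    have h2 : F a + F (-a) = 0 := by rw [← hadd, add_neg_cancel, h0]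
    rw [ha, zero_add] at h2
    exact h2

end AuxHoms
/-- Given a graded Morita context with idempotent graded
rings, unital bimodules and surjective trace maps, and a unital graded left
`A`-module `U`, the map `η : (B·HOM_A(P,A)) ⊗_A U → B·HOM_A(P,U)`,
`η(f⊗u)(p) = f(p)·u`, is a surjective graded left `B`-module homomorphism of
degree `e` whose kernel is left `B`-torsion. -/
theorem eta_epimorphism_torsion_kernel
    {Γ : Type v} {A B P Q U : Type u} [Group Γ] [DecidableEq Γ]
    [NonUnitalRing A] [NonUnitalRing B] [AddCommGroup P] [AddCommGroup Q]
    [AddCommGroup U]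
    (𝒜 : Γ → AddSubgroup A) (ℬ : Γ → AddSubgroup B)
    (𝓟 : Γ → AddSubgroup P) (𝒬 : Γ → AddSubgroup Q) (𝒰 : Γ → AddSubgroup U)
    [DirectSum.Decomposition 𝒜] [DirectSum.Decomposition ℬ]
    [DirectSum.Decomposition 𝓟] [DirectSum.Decomposition 𝒬]
    [DirectSum.Decomposition 𝒰]
    (ap : A → P → P) (pb : P → B → P) (bq : B → Q → Q) (qa : Q → A → Q)
    (pr : P → Q → A) (br : Q → P → B)
    (ctx : GMoritaCtx Γ A B P Q 𝒜 ℬ 𝓟 𝒬 ap pb bq qa pr br)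
    (sU : A → U → U) (hU : IsLMod A U sU) (hUu : IsUnitalL sU)
    (hUg : IsGModL 𝒜 𝒰 sU)
    -- the right `A`-action on `H := B·HOM_A(P,A)`, `(f·a)(p) = f(p)a`
    (raH : ↥(smulHOM B (HOML ap (fun a x : A => a * x) 𝓟 𝒜) (fun (b : B) (p : P) => pb p b)) →
      A → ↥(smulHOM B (HOML ap (fun a x : A => a * x) 𝓟 𝒜) (fun (b : B) (p : P) => pb p b)))
    (hraH : ∀ f (a : A) (p : P), ((raH f a : _) : P →+ A) p = ((f : _) : P →+ A) p * a)
    -- the left `B`-action on `H`, `(b·f)(p) = f(pb)`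
    (bH : B → ↥(smulHOM B (HOML ap (fun a x : A => a * x) 𝓟 𝒜) (fun (b : B) (p : P) => pb p b)) →
      ↥(smulHOM B (HOML ap (fun a x : A => a * x) 𝓟 𝒜) (fun (b : B) (p : P) => pb p b)))
    (hbH : ∀ (b : B) f (p : P), ((bH b f : _) : P →+ A) p = ((f : _) : P →+ A) (pb p b))
    -- `η : H ⊗_A U → (P →+ U)` with `η(f⊗u)(p) = f(p)·u`
    (η : Ten A raH sU →+ (P →+ U))
    (hη : ∀ f (u : U) (p : P), η (tmul f u) p = sU (((f : _) : P →+ A) p) u)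
    -- the left `B`-action on `H ⊗_A U`, `b·(f⊗u) = (b·f)⊗u`
    (bT : B → Ten A raH sU →+ Ten A raH sU)
    (hbT : ∀ (b : B) f (u : U), bT b (tmul f u) = tmul (bH b f) u) :
    -- η lands in `B·HOM_A(P,U)`
    (∀ t, η t ∈ smulHOM B (HOML ap sU 𝓟 𝒰) (fun (b : B) (p : P) => pb p b)) ∧
    -- η is left `B`-linear: `η(b·t) = b·η(t)` where `(b·g)(p) = g(pb)`
    (∀ (b : B) t (p : P), η (bT b t) p = η t (pb p b)) ∧
    -- η is graded of degree `e`
    (∀ (σ τ : Γ)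
      (f : ↥(smulHOM B (HOML ap (fun a x : A => a * x) 𝓟 𝒜) (fun (b : B) (p : P) => pb p b)))
      (u : U), IsDegL 𝓟 𝒜 σ (f : P →+ A) → u ∈ 𝒰 τ →
      IsDegL 𝓟 𝒰 (σ * τ) (η (tmul f u))) ∧
    -- η is surjective onto `B·HOM_A(P,U)`
    (∀ g ∈ smulHOM B (HOML ap sU 𝓟 𝒰) (fun (b : B) (p : P) => pb p b), ∃ t, η t = g) ∧
    -- the kernel of η is left `B`-torsion
    (∀ t, η t = 0 → ∀ b : B, bT b t = 0) := by
  classical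
  -- every element of HOM_A(P,A) is A-linear
  have hAlin : ∀ g ∈ HOML ap (fun a x : A => a * x) 𝓟 𝒜, ∀ (a : A) (p : P),
      g (ap a p) = a * g p :=
    fun g hg => HOML_lin (fun a x y => mul_add a x y) hg
  -- every element of H = B·HOM_A(P,A) is A-linear
  have hHlin : ∀ g ∈ smulHOM B (HOML ap (fun a x : A => a * x) 𝓟 𝒜)
      (fun (b : B) (p : P) => pb p b), ∀ (a : A) (p : P), g (ap a p) = a * g p := by
    intro g hg
    refine (AddSubgroup.closure_le
      (linSub A P A ap (fun a x : A => a * x) (fun a x y => mul_add a x y))).mpr ?_ hg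
    rintro g' ⟨c, h, hh, hge⟩ a p
    have hge' : ∀ m : P, g' m = h (pb m c) := hge
    show g' (ap a p) = a * g' p
    rw [hge' (ap a p), ctx.bimodP a p c, hAlin h hh, hge' p]
  -- Phi of a homogeneous A-linear map lands in HOM_A(P,U)
  have claimAgen : ∀ (σ : Γ) (g : P →+ A), IsLinL ap (fun a x : A => a * x) g →
      IsDegL 𝓟 𝒜 σ g → ∀ u : U, Phi sU hU.add_smul u g ∈ HOML ap sU 𝓟 𝒰 := by
    intro σ g hlin hdeg u
    have homog : ∀ (τ : Γ) (v : U), v ∈ 𝒰 τ →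
        Phi sU hU.add_smul v g ∈ HOML ap sU 𝓟 𝒰 := by
      intro τ v hv
      refine AddSubgroup.subset_closure ⟨?_, σ * τ, ?_⟩
      · intro a p
        show sU (g (ap a p)) v = sU a (sU (g p) v)
        rw [hlin a p]
        exact hU.mul_smul a (g p) v
      · intro ρ p hp
        show sU (g p) v ∈ 𝒰 (ρ * (σ * τ))
        rw [← mul_assoc]
        exact hUg (hdeg ρ p hp) hv
    have hu : u ∈ (HOML ap sU 𝓟 𝒰).comap (PhiU sU hU.add_smul hU.smul_add g) := by
      rw [← DirectSum.sum_support_decompose 𝒰 u]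
      exact sum_mem (fun i _ => homog i _ (SetLike.coe_mem _))
    exact hu
  have claimA : ∀ g ∈ HOML ap (fun a x : A => a * x) 𝓟 𝒜, ∀ u : U,
      Phi sU hU.add_smul u g ∈ HOML ap sU 𝓟 𝒰 := by
    intro g hg u
    refine (AddSubgroup.closure_le
      ((HOML ap sU 𝓟 𝒰).comap (Phi sU hU.add_smul u))).mpr ?_ hg
    rintro g' ⟨hlin, σ, hdeg⟩
    exact claimAgen σ g' hlin hdeg u
  have claimB : ∀ g ∈ smulHOM B (HOML ap (fun a x : A => a * x) 𝓟 𝒜)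
      (fun (b : B) (p : P) => pb p b), ∀ u : U,
      Phi sU hU.add_smul u g ∈ smulHOM B (HOML ap sU 𝓟 𝒰)
        (fun (b : B) (p : P) => pb p b) := by
    intro g hg u
    refine (AddSubgroup.closure_le (AddSubgroup.comap (Phi sU hU.add_smul u)
      (smulHOM B (HOML ap sU 𝓟 𝒰) (fun (b : B) (p : P) => pb p b)))).mpr ?_ hg
    rintro g' ⟨c, h, hh, hge⟩
    refine AddSubgroup.subset_closure ⟨c, Phi sU hU.add_smul u h, claimA h hh u, ?_⟩
    intro m
    show sU (g' m) u = sU (h (pb m c)) u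
    rw [hge m]
  -- Part 1
  have part1 : ∀ t, η t ∈ smulHOM B (HOML ap sU 𝓟 𝒰)
      (fun (b : B) (p : P) => pb p b) := by
    intro t
    have gen : ∀ f u, tmul (rs := raH) (ls := sU) f u ∈ AddSubgroup.comap η
        (smulHOM B (HOML ap sU 𝓟 𝒰) (fun (b : B) (p : P) => pb p b)) := by
      intro f u
      rw [AddSubgroup.mem_comap]
      have e : η (tmul f u) = Phi sU hU.add_smul u f.1 := by
        ext p; rw [hη]; rfl
      rw [e]
      exact claimB f.1 f.2 u
    exact ten_ind _ gen t
  -- Part 2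
  have part2 : ∀ (b : B) t (p : P), η (bT b t) p = η t (pb p b) := by
    intro b t p
    have key : ∀ t, t ∈ ((η.comp (bT b)) -
        ((preComp (TwHom pb b (fun p p' => ctx.rmodP.add_smul p p' b))).comp η)).ker := by
      refine ten_ind _ (fun f u => ?_)
      rw [AddMonoidHom.mem_ker, AddMonoidHom.sub_apply, sub_eq_zero]
      ext p'
      show η (bT b (tmul f u)) p' = η (tmul f u) (pb p' b)
      rw [hbT, hη, hbH, ← hη]
    have h := key t
    rw [AddMonoidHom.mem_ker, AddMonoidHom.sub_apply, sub_eq_zero] at h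
    exact congrArg (fun (φ : P →+ U) => φ p) h
  -- Part 3
  have part3 : ∀ (σ τ : Γ)
      (f : ↥(smulHOM B (HOML ap (fun a x : A => a * x) 𝓟 𝒜)
        (fun (b : B) (p : P) => pb p b)))
      (u : U), IsDegL 𝓟 𝒜 σ (f : P →+ A) → u ∈ 𝒰 τ →
      IsDegL 𝓟 𝒰 (σ * τ) (η (tmul f u)) := by
    intro σ τ f u hf hu ρ p hp
    rw [hη, ← mul_assoc]
    exact hUg (hf ρ p hp) hu
  -- the maps f_q : p ↦ ⟨p,q⟩ lie in HOM_A(P,A)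
  have S1 : ∀ q : Q, FqHom pr ctx.pr_addl ctx.pr_addr q ∈
      HOML ap (fun a x : A => a * x) 𝓟 𝒜 := by
    intro q
    have homog : ∀ (τ : Γ) (q' : Q), q' ∈ 𝒬 τ → FqHom pr ctx.pr_addl ctx.pr_addr q' ∈
        HOML ap (fun a x : A => a * x) 𝓟 𝒜 := by
      intro τ q' hq'
      refine AddSubgroup.subset_closure ⟨?_, τ, ?_⟩
      · intro a p
        show pr (ap a p) q' = a * pr p q'
        exact ctx.pr_linl a p q'
      · intro ρ p hp
        show pr p q' ∈ 𝒜 (ρ * τ)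
        exact ctx.pr_graded hp hq'
    have hq : q ∈ (HOML ap (fun a x : A => a * x) 𝓟 𝒜).comap
        (FqHom pr ctx.pr_addl ctx.pr_addr) := by
      rw [← DirectSum.sum_support_decompose 𝒬 q]
      exact sum_mem (fun i _ => homog i _ (SetLike.coe_mem _))
    exact hq
  -- and in fact in H = B·HOM_A(P,A)
  have S2 : ∀ q : Q, FqHom pr ctx.pr_addl ctx.pr_addr q ∈
      smulHOM B (HOML ap (fun a x : A => a * x) 𝓟 𝒜)
        (fun (b : B) (p : P) => pb p b) := by
    intro q
    have hq : q ∈ AddSubgroup.comap (FqHom pr ctx.pr_addl ctx.pr_addr)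
        (smulHOM B (HOML ap (fun a x : A => a * x) 𝓟 𝒜)
          (fun (b : B) (p : P) => pb p b)) := by
      refine (AddSubgroup.closure_le _).mpr ?_ (ctx.unitalQl q)
      rintro x ⟨b, q', rfl⟩
      refine AddSubgroup.mem_comap.mpr
        (AddSubgroup.subset_closure ⟨b, FqHom pr ctx.pr_addl ctx.pr_addr q', S1 q', ?_⟩)
      intro m
      show pr m (bq b q') = pr (pb m b) q'
      exact (ctx.pr_bal m b q').symm
    exact hq
  -- Part 4
  have part4 : ∀ g ∈ smulHOM B (HOML ap sU 𝓟 𝒰) (fun (b : B) (p : P) => pb p b),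
      ∃ t, η t = g := by
    intro g hg
    have hrange : g ∈ η.range := by
      refine (AddSubgroup.closure_le η.range).mpr ?_ hg
      rintro g' ⟨b, h, hh, hge⟩
      have hlin : IsLinL ap sU h := HOML_lin hU.smul_add hh
      have key : ∀ (q : Q) (p'' : P),
          (ThetaHom pb h ctx.rmodP.add_smul ctx.rmodP.smul_add) (br q p'') ∈ η.range := by
        intro q p''
        refine AddMonoidHom.mem_range.mpr
          ⟨tmul (⟨FqHom pr ctx.pr_addl ctx.pr_addr q, S2 q⟩ :
            ↥(smulHOM B (HOML ap (fun a x : A => a * x) 𝓟 𝒜)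
              (fun (b : B) (p : P) => pb p b))) (h p''), ?_⟩
        ext p
        rw [hη]
        show sU (pr p q) (h p'') = h (pb p (br q p''))
        rw [ctx.assoc1 p q p'', hlin]
      have hb : (ThetaHom pb h ctx.rmodP.add_smul ctx.rmodP.smul_add) b ∈ η.range := by
        have hb' : b ∈ AddSubgroup.comap
            (ThetaHom pb h ctx.rmodP.add_smul ctx.rmodP.smul_add) η.range := by
          refine (AddSubgroup.closure_le _).mpr ?_ (ctx.sur_br b)
          rintro x ⟨q, p'', rfl⟩
          exact key q p''
        exact hb'
      obtain ⟨t, ht⟩ := AddMonoidHom.mem_range.mp hb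
      refine AddMonoidHom.mem_range.mpr ⟨t, ?_⟩
      ext m
      rw [ht]
      show h (pb m b) = g' m
      exact (hge m).symm
    obtain ⟨t, ht⟩ := AddMonoidHom.mem_range.mp hrange
    exact ⟨t, ht⟩
  -- additivity of bT in b
  have bT_add : ∀ (b b' : B) (t), bT (b + b') t = bT b t + bT b' t := by
    intro b b' t
    have key : ∀ t, t ∈ (bT (b + b') - (bT b + bT b')).ker := by
      refine ten_ind _ (fun f u => ?_)
      rw [AddMonoidHom.mem_ker, AddMonoidHom.sub_apply, sub_eq_zero, AddMonoidHom.add_apply]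
      have e : bH (b + b') f = bH b f + bH b' f := by
        apply Subtype.ext
        ext p
        rw [hbH, ctx.rmodP.smul_add p b b', map_add, AddSubgroup.coe_add,
          AddMonoidHom.add_apply, hbH, hbH]
      rw [hbT (b + b') f u, e, tmul_add_left', hbT b f u, hbT b' f u]
    have h := key t
    rw [AddMonoidHom.mem_ker, AddMonoidHom.sub_apply, sub_eq_zero, AddMonoidHom.add_apply] at h
    exact h
  -- the key torsion identity
  have key5 : ∀ (q : Q) (p'' : P) (t), bT (br q p'') t =
      tmul (rs := raH) (ls := sU) ⟨FqHom pr ctx.pr_addl ctx.pr_addr q, S2 q⟩ (η t p'') := by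
    intro q p'' t
    have key : ∀ t, t ∈ (bT (br q p'') - AddMonoidHom.mk'
        (fun t => tmul (rs := raH) (ls := sU)
          ⟨FqHom pr ctx.pr_addl ctx.pr_addr q, S2 q⟩ (η t p''))
        (fun t t' => by
          show tmul _ (η (t + t') p'') = _
          rw [map_add, AddMonoidHom.add_apply, tmul_add_right'])).ker := by
      refine ten_ind _ (fun f u => ?_)
      rw [AddMonoidHom.mem_ker, AddMonoidHom.sub_apply, sub_eq_zero]
      show bT (br q p'') (tmul f u) =
        tmul (rs := raH) (ls := sU) ⟨FqHom pr ctx.pr_addl ctx.pr_addr q, S2 q⟩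
          (η (tmul f u) p'')
      have hflin := hHlin f.1 f.2
      have e1 : bH (br q p'') f = raH ⟨FqHom pr ctx.pr_addl ctx.pr_addr q, S2 q⟩ (f.1 p'') := by
        apply Subtype.ext
        ext p
        rw [hbH, hraH]
        show f.1 (pb p (br q p'')) = pr p q * f.1 p''
        rw [ctx.assoc1 p q p'', hflin]
      rw [hbT, e1, tmul_balance', hη]
    have h := key t
    rw [AddMonoidHom.mem_ker, AddMonoidHom.sub_apply, sub_eq_zero] at h
    exact h
  -- Part 5
  have part5 : ∀ t, η t = 0 → ∀ b : B, bT b t = 0 := by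
    intro t h0 b
    have h00 : bT 0 t = 0 := by
      have h := bT_add 0 0 t
      rw [add_zero] at h
      exact left_eq_add.mp h
    have hb : b ∈ kerSet (fun b => bT b t) h00 (fun a b => bT_add a b t) := by
      refine (AddSubgroup.closure_le _).mpr ?_ (ctx.sur_br b)
      rintro x ⟨q, p'', rfl⟩
      show bT (br q p'') t = 0
      rw [key5 q p'' t, h0, AddMonoidHom.zero_apply]
      exact tmul_zero_right' _
    exact hb
  exact ⟨part1, part2, part3, part4, part5⟩
end

section
/- Let (A,B,P,Q,μ,ν) be a graded Morita context with idempotent graded rings, unital bimodules and surjective trace maps. Then for any unital graded left A-module U there is a graded isomorphism of left B-modules B·HOM_A(P, U) ≅ B·HOM_A(P, U/t_A(U)). -/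
/-!
Common infrastructure: non-unital (graded) rings, non-unital graded modules
(given by explicit action functions), graded homomorphisms of all degrees,
traces, torsion submodules, balanced tensor products, and graded Morita
contexts, following Dokuchaev–Simón, "Graded Equivalence for Graded
Idempotent Rings".
-/

open DirectSum

universe u v

section AuxLemmas

/-- Elements of a closure of `A`-linear maps are `A`-linear, provided the
target action is additive. -/
lemma IsLinL_of_mem_closure {A M N : Type*} [NonUnitalRing A] [AddCommGroup M]
    [AddCommGroup N] (sM : A → M → M) (sN : A → N → N)
    (h0 : ∀ a : A, sN a (0 : N) = 0)
    (hadd : ∀ (a : A) (x y : N), sN a (x + y) = sN a x + sN a y)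
    (hneg : ∀ (a : A) (x : N), sN a (-x) = - sN a x)
    {s : Set (M →+ N)} (hs : ∀ f ∈ s, IsLinL sM sN f)
    {f : M →+ N} (hf : f ∈ AddSubgroup.closure s) : IsLinL sM sN f := by
  let K : AddSubgroup (M →+ N) :=
    { carrier := {f | IsLinL sM sN f}
      zero_mem' := by intro a m; simp [h0]
      add_mem' := by intro f g hf hg a m; simp [hf a m, hg a m, hadd]
      neg_mem' := by intro f hf a m; simp [hf a m, hneg] }
  exact (AddSubgroup.closure_le K).mpr hs hf

/-- The auxiliary map `p ↦ sU (pr p q) u` as an additive homomorphism. -/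
def gAux {A P Q U : Type*} [NonUnitalRing A] [AddCommGroup P] [AddCommGroup Q]
    [AddCommGroup U] (pr : P → Q → A) (sU : A → U → U)
    (hpr : ∀ (p p' : P) (q : Q), pr (p + p') q = pr p q + pr p' q)
    (hsU : ∀ (a b : A) (u : U), sU (a + b) u = sU a u + sU b u)
    (q : Q) (u : U) : P →+ U :=
  AddMonoidHom.mk' (fun p => sU (pr p q) u) (fun p p' => by
    show sU (pr (p + p') q) u = sU (pr p q) u + sU (pr p' q) u
    rw [hpr, hsU])

@[simp] lemma gAux_apply {A P Q U : Type*} [NonUnitalRing A] [AddCommGroup P]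
    [AddCommGroup Q] [AddCommGroup U] (pr : P → Q → A) (sU : A → U → U)
    (hpr : ∀ (p p' : P) (q : Q), pr (p + p') q = pr p q + pr p' q)
    (hsU : ∀ (a b : A) (u : U), sU (a + b) u = sU a u + sU b u)
    (q : Q) (u : U) (p : P) : gAux pr sU hpr hsU q u p = sU (pr p q) u := rfl

end AuxLemmas

/-- Given a graded Morita context with idempotent graded
rings, unital bimodules and surjective trace maps, and a unital graded left
`A`-module `U`, composition with the projection `π : U → U/t_A(U)` gives a
graded isomorphism of left `B`-modules
`B·HOM_A(P,U) ≅ B·HOM_A(P, U/t_A(U))`. -/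
theorem BHOM_quotient_iso
    {Γ : Type v} {A B P Q U : Type u} [Group Γ] [DecidableEq Γ]
    [NonUnitalRing A] [NonUnitalRing B] [AddCommGroup P] [AddCommGroup Q]
    [AddCommGroup U]
    (𝒜 : Γ → AddSubgroup A) (ℬ : Γ → AddSubgroup B)
    (𝓟 : Γ → AddSubgroup P) (𝒬 : Γ → AddSubgroup Q) (𝒰 : Γ → AddSubgroup U)
    [DirectSum.Decomposition 𝒜] [DirectSum.Decomposition ℬ]
    [DirectSum.Decomposition 𝓟] [DirectSum.Decomposition 𝒬]
    [DirectSum.Decomposition 𝒰]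
    (ap : A → P → P) (pb : P → B → P) (bq : B → Q → Q) (qa : Q → A → Q)
    (pr : P → Q → A) (br : Q → P → B)
    (ctx : GMoritaCtx Γ A B P Q 𝒜 ℬ 𝓟 𝒬 ap pb bq qa pr br)
    (sU : A → U → U) (hU : IsLMod A U sU) (hUu : IsUnitalL sU)
    (hUg : IsGModL 𝒜 𝒰 sU)
    -- the induced `A`-action on `U/t_A(U)`
    (sUq : A → (U ⧸ torsionL hU) → (U ⧸ torsionL hU))
    (hsUq : ∀ (a : A) (u : U),
      sUq a (QuotientAddGroup.mk' (torsionL hU) u) =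
        QuotientAddGroup.mk' (torsionL hU) (sU a u)) :
    -- composition with π maps `B·HOM_A(P,U)` into `B·HOM_A(P,U/t_A(U))` ...
    (∀ f ∈ smulHOM B (HOML ap sU 𝓟 𝒰) (fun (b : B) (p : P) => pb p b),
      (QuotientAddGroup.mk' (torsionL hU)).comp f ∈
        smulHOM B (HOML ap sUq 𝓟 (fun σ => (𝒰 σ).map (QuotientAddGroup.mk' (torsionL hU))))
          (fun (b : B) (p : P) => pb p b)) ∧
    -- ... injectively ...
    (∀ f ∈ smulHOM B (HOML ap sU 𝓟 𝒰) (fun (b : B) (p : P) => pb p b),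
     ∀ g ∈ smulHOM B (HOML ap sU 𝓟 𝒰) (fun (b : B) (p : P) => pb p b),
      (QuotientAddGroup.mk' (torsionL hU)).comp f =
        (QuotientAddGroup.mk' (torsionL hU)).comp g → f = g) ∧
    -- ... and surjectively ...
    (∀ h ∈ smulHOM B (HOML ap sUq 𝓟 (fun σ => (𝒰 σ).map (QuotientAddGroup.mk' (torsionL hU))))
        (fun (b : B) (p : P) => pb p b),
      ∃ f ∈ smulHOM B (HOML ap sU 𝓟 𝒰) (fun (b : B) (p : P) => pb p b),
        (QuotientAddGroup.mk' (torsionL hU)).comp f = h) ∧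
    -- ... respecting the grading.
    (∀ (σ : Γ) (f : P →+ U), f ∈ smulHOM B (HOML ap sU 𝓟 𝒰) (fun (b : B) (p : P) => pb p b) →
      IsDegL 𝓟 𝒰 σ f →
      IsDegL 𝓟 (fun σ => (𝒰 σ).map (QuotientAddGroup.mk' (torsionL hU))) σ
        ((QuotientAddGroup.mk' (torsionL hU)).comp f)) := by
  classical
  set π := QuotientAddGroup.mk' (torsionL hU) with hπ
  set 𝒰q : Γ → AddSubgroup (U ⧸ torsionL hU) := fun σ => (𝒰 σ).map π with h𝒰q
  set tw : B → P → P := fun b p => pb p b with htw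
  -- elementary consequences of the module axioms
  have sU_zero : ∀ a : A, sU a (0 : U) = 0 := by
    intro a
    have h := hU.smul_add a 0 0
    rw [add_zero] at h
    exact (left_eq_add.mp h)
  have zero_sU : ∀ u : U, sU (0 : A) u = 0 := by
    intro u
    have h := hU.add_smul 0 0 u
    rw [add_zero] at h
    exact (left_eq_add.mp h)
  have sU_neg : ∀ (a : A) (u : U), sU a (-u) = - sU a u := by
    intro a u
    have h := hU.smul_add a u (-u)
    rw [add_neg_cancel, sU_zero] at h
    exact eq_neg_of_add_eq_zero_right h.symm
  have neg_sU : ∀ (a : A) (u : U), sU (-a) u = - sU a u := by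
    intro a u
    have h := hU.add_smul a (-a) u
    rw [add_neg_cancel, zero_sU] at h
    exact eq_neg_of_add_eq_zero_right h.symm
  have pr_zero_r : ∀ p : P, pr p (0 : Q) = 0 := by
    intro p
    have h := ctx.pr_addr p 0 0
    rw [add_zero] at h
    exact (left_eq_add.mp h)
  have pr_neg_r : ∀ (p : P) (q : Q), pr p (-q) = - pr p q := by
    intro p q
    have h := ctx.pr_addr p q (-q)
    rw [add_neg_cancel, pr_zero_r] at h
    exact eq_neg_of_add_eq_zero_right h.symm
  have pb_zero : ∀ m : P, pb m (0 : B) = 0 := by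
    intro m
    have h := ctx.rmodP.smul_add m 0 0
    rw [add_zero] at h
    exact (left_eq_add.mp h)
  have pb_neg : ∀ (m : P) (c : B), pb m (-c) = - pb m c := by
    intro m c
    have h := ctx.rmodP.smul_add m c (-c)
    rw [add_neg_cancel, pb_zero] at h
    exact eq_neg_of_add_eq_zero_right h.symm
  -- the induced action on the quotient is additive
  have sUq_zero : ∀ a : A, sUq a (0 : U ⧸ torsionL hU) = 0 := by
    intro a
    have h := hsUq a 0
    rw [map_zero, sU_zero, map_zero] at h
    exact h
  have sUq_add : ∀ (a : A) (x y : U ⧸ torsionL hU),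
      sUq a (x + y) = sUq a x + sUq a y := by
    intro a x y
    obtain ⟨u, rfl⟩ := QuotientAddGroup.mk'_surjective (torsionL hU) x
    obtain ⟨v, rfl⟩ := QuotientAddGroup.mk'_surjective (torsionL hU) y
    rw [← map_add, hsUq, hsUq, hsUq, hU.smul_add, map_add]
  have sUq_neg : ∀ (a : A) (x : U ⧸ torsionL hU), sUq a (-x) = - sUq a x := by
    intro a x
    obtain ⟨u, rfl⟩ := QuotientAddGroup.mk'_surjective (torsionL hU) x
    rw [← map_neg, hsUq, hsUq, sU_neg, map_neg]
  -- linearity of all elements of HOM groups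
  have HOML_lin : ∀ f ∈ HOML ap sU 𝓟 𝒰, IsLinL ap sU f := fun f hf =>
    IsLinL_of_mem_closure ap sU sU_zero hU.smul_add sU_neg
      (fun g hg => hg.1) hf
  have HOMLq_lin : ∀ f ∈ HOML ap sUq 𝓟 𝒰q, IsLinL ap sUq f := fun f hf =>
    IsLinL_of_mem_closure ap sUq sUq_zero sUq_add sUq_neg
      (fun g hg => hg.1) hf
  have smul_lin : ∀ f ∈ smulHOM B (HOML ap sU 𝓟 𝒰) tw, IsLinL ap sU f := by
    intro f hf
    refine IsLinL_of_mem_closure ap sU sU_zero hU.smul_add sU_neg ?_ hf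
    rintro g ⟨c, f', hf', hg⟩ a m
    have hlin := HOML_lin f' hf'
    rw [hg, hg]
    show f' (pb (ap a m) c) = sU a (f' (pb m c))
    rw [ctx.bimodP, hlin]
  -- the auxiliary maps `G q u : p ↦ sU (pr p q) u`
  set G : Q → U → (P →+ U) := gAux pr sU ctx.pr_addl hU.add_smul with hG
  have G_apply : ∀ (q : Q) (u : U) (p : P), G q u p = sU (pr p q) u :=
    fun q u p => rfl
  have G_addq : ∀ (q q' : Q) (u : U), G (q + q') u = G q u + G q' u := by
    intro q q' u
    ext p
    simp only [AddMonoidHom.add_apply, G_apply]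
    rw [ctx.pr_addr, hU.add_smul]
  have G_zeroq : ∀ u : U, G (0 : Q) u = 0 := by
    intro u
    ext p
    simp only [AddMonoidHom.zero_apply, G_apply, pr_zero_r, zero_sU]
  have G_negq : ∀ (q : Q) (u : U), G (-q) u = - G q u := by
    intro q u
    ext p
    simp only [AddMonoidHom.neg_apply, G_apply, pr_neg_r, neg_sU]
  have G_addu : ∀ (q : Q) (u u' : U), G q (u + u') = G q u + G q u' := by
    intro q u u'
    ext p
    simp only [AddMonoidHom.add_apply, G_apply, hU.smul_add]
  have G_zerou : ∀ q : Q, G q (0 : U) = 0 := by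
    intro q
    ext p
    simp only [AddMonoidHom.zero_apply, G_apply, sU_zero]
  have G_sumq : ∀ (s : Finset Γ) (F : Γ → Q) (u : U),
      G (∑ i ∈ s, F i) u = ∑ i ∈ s, G (F i) u := by
    intro s F u
    induction s using Finset.cons_induction with
    | empty => simpa using G_zeroq u
    | cons i s hi ih => rw [Finset.sum_cons, Finset.sum_cons, G_addq, ih]
  have G_sumu : ∀ (q : Q) (s : Finset Γ) (F : Γ → U),
      G q (∑ i ∈ s, F i) = ∑ i ∈ s, G q (F i) := by
    intro q s F
    induction s using Finset.cons_induction with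
    | empty => simpa using G_zerou q
    | cons i s hi ih => rw [Finset.sum_cons, Finset.sum_cons, G_addu, ih]
  have G_lin : ∀ (q : Q) (u : U), IsLinL ap sU (G q u) := by
    intro q u a p
    rw [G_apply, G_apply, ctx.pr_linl, hU.mul_smul]
  have G_memHOML : ∀ (q : Q) (u : U), G q u ∈ HOML ap sU 𝓟 𝒰 := by
    intro q u
    rw [← DirectSum.sum_support_decompose 𝒬 q, G_sumq]
    refine AddSubgroup.sum_mem _ fun i _ => ?_
    rw [← DirectSum.sum_support_decompose 𝒰 u, G_sumu]
    refine AddSubgroup.sum_mem _ fun j _ => ?_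
    refine AddSubgroup.subset_closure ⟨G_lin _ _, i * j, ?_⟩
    intro τ p hp
    have h1 : pr p ((DirectSum.decompose 𝒬 q i : 𝒬 i) : Q) ∈ 𝒜 (τ * i) :=
      ctx.pr_graded hp (SetLike.coe_mem _)
    have h2 := hUg h1 (SetLike.coe_mem (DirectSum.decompose 𝒰 u j))
    rw [G_apply, mul_assoc] at *
    exact h2
  -- `G q u` lies in `B·HOM_A(P,U)` (using unitality of `Q`)
  have G_mem_smul : ∀ (q : Q) (u : U),
      G q u ∈ smulHOM B (HOML ap sU 𝓟 𝒰) tw := by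
    intro q u
    let SQ : AddSubgroup Q :=
      { carrier := {q | G q u ∈ smulHOM B (HOML ap sU 𝓟 𝒰) tw}
        zero_mem' := by
          show G (0 : Q) u ∈ smulHOM B (HOML ap sU 𝓟 𝒰) tw
          rw [G_zeroq]; exact zero_mem _
        add_mem' := by
          intro q q' hq hq'
          show G (q + q') u ∈ smulHOM B (HOML ap sU 𝓟 𝒰) tw
          rw [G_addq]; exact add_mem hq hq'
        neg_mem' := by
          intro q hq
          show G (-q) u ∈ smulHOM B (HOML ap sU 𝓟 𝒰) tw
          rw [G_negq]; exact neg_mem hq }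
    have hle : AddSubgroup.closure {x : Q | ∃ (b : B) (q' : Q), x = bq b q'} ≤ SQ := by
      refine (AddSubgroup.closure_le SQ).mpr ?_
      rintro x ⟨b, q', rfl⟩
      show G (bq b q') u ∈ smulHOM B (HOML ap sU 𝓟 𝒰) tw
      refine AddSubgroup.subset_closure ⟨b, G q' u, G_memHOML q' u, ?_⟩
      intro m
      show sU (pr m (bq b q')) u = sU (pr (pb m b) q') u
      rw [ctx.pr_bal]
    exact hle (ctx.unitalQl q)
  -- composition with `π` as an additive map on hom groups
  let Φ : (P →+ U) →+ (P →+ (U ⧸ torsionL hU)) :=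
    { toFun := fun f => π.comp f
      map_zero' := by ext p; simp
      map_add' := by intro f g; ext p; simp }
  -- Part 1: composition with π preserves the HOM groups
  have comp_HOML : ∀ f ∈ HOML ap sU 𝓟 𝒰, π.comp f ∈ HOML ap sUq 𝓟 𝒰q := by
    intro f hf
    have hle : HOML ap sU 𝓟 𝒰 ≤ (HOML ap sUq 𝓟 𝒰q).comap Φ := by
      refine (AddSubgroup.closure_le _).mpr ?_
      rintro g ⟨hlin, σ, hdeg⟩
      refine AddSubgroup.subset_closure ⟨?_, σ, ?_⟩
      · intro a m
        show π (g (ap a m)) = sUq a (π (g m))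
        rw [hlin, hsUq]
      · intro τ m hm
        exact AddSubgroup.mem_map.mpr ⟨g m, hdeg τ m hm, rfl⟩
    exact hle hf
  have part1 : ∀ f ∈ smulHOM B (HOML ap sU 𝓟 𝒰) tw,
      π.comp f ∈ smulHOM B (HOML ap sUq 𝓟 𝒰q) tw := by
    intro f hf
    have hle : smulHOM B (HOML ap sU 𝓟 𝒰) tw ≤
        (smulHOM B (HOML ap sUq 𝓟 𝒰q) tw).comap Φ := by
      refine (AddSubgroup.closure_le _).mpr ?_
      rintro g ⟨c, f', hf', hg⟩
      refine AddSubgroup.subset_closure ⟨c, π.comp f', comp_HOML f' hf', ?_⟩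
      intro m
      show π (g m) = π (f' (tw c m))
      rw [hg m]
    exact hle hf
  -- Part 2: injectivity
  have part2 : ∀ f ∈ smulHOM B (HOML ap sU 𝓟 𝒰) tw,
      ∀ g ∈ smulHOM B (HOML ap sU 𝓟 𝒰) tw,
      π.comp f = π.comp g → f = g := by
    intro f hf g hg hfg
    have hsub : f - g ∈ smulHOM B (HOML ap sU 𝓟 𝒰) tw := sub_mem hf hg
    have hlin := smul_lin _ hsub
    have htor : ∀ p : P, (f - g) p ∈ torsionL hU := by
      intro p
      have h1 : π ((f - g) p) = 0 := by
        have h2 := DFunLike.congr_fun hfg p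
        simp only [AddMonoidHom.comp_apply] at h2
        rw [AddMonoidHom.sub_apply, map_sub, h2, sub_self]
      exact (QuotientAddGroup.eq_zero_iff _).mp h1
    have hker : AddSubgroup.closure {x : P | ∃ (a : A) (p' : P), x = ap a p'} ≤
        (f - g).ker := by
      refine (AddSubgroup.closure_le _).mpr ?_
      rintro x ⟨a, p', rfl⟩
      have h3 : (f - g) (ap a p') = sU a ((f - g) p') := hlin a p'
      show (f - g) (ap a p') = 0
      rw [h3, htor p' a]
    have hz : ∀ p : P, (f - g) p = 0 := fun p =>
      AddMonoidHom.mem_ker.mp (hker (ctx.unitalPl p))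
    have : f - g = 0 := AddMonoidHom.ext fun p => hz p
    exact sub_eq_zero.mp this
  -- Part 3: surjectivity
  have surj_gen : ∀ (c : B) (k : P →+ (U ⧸ torsionL hU)), IsLinL ap sUq k →
      ∃ f ∈ smulHOM B (HOML ap sU 𝓟 𝒰) tw, ∀ m : P, π (f m) = k (pb m c) := by
    intro c k hk
    let SB : AddSubgroup B :=
      { carrier := {c | ∃ f ∈ smulHOM B (HOML ap sU 𝓟 𝒰) tw,
          ∀ m : P, π (f m) = k (pb m c)}
        zero_mem' := ⟨0, zero_mem _, fun m => by
          simp only [AddMonoidHom.zero_apply, map_zero, pb_zero m]⟩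
        add_mem' := by
          rintro c c' ⟨f, hf, hfc⟩ ⟨f', hf', hfc'⟩
          exact ⟨f + f', add_mem hf hf', fun m => by
            rw [AddMonoidHom.add_apply, map_add, hfc m, hfc' m,
              ctx.rmodP.smul_add, map_add]⟩
        neg_mem' := by
          rintro c ⟨f, hf, hfc⟩
          exact ⟨-f, neg_mem hf, fun m => by
            rw [AddMonoidHom.neg_apply, map_neg, hfc m, pb_neg, map_neg]⟩ }
    have hle : AddSubgroup.closure {x : B | ∃ (q : Q) (p : P), x = br q p} ≤ SB := by
      refine (AddSubgroup.closure_le SB).mpr ?_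
      rintro x ⟨q, p', rfl⟩
      obtain ⟨u, hu⟩ := QuotientAddGroup.mk'_surjective (torsionL hU) (k p')
      refine ⟨G q u, G_mem_smul q u, fun m => ?_⟩
      rw [G_apply, ctx.assoc1 m q p', hk (pr m q) p', ← hu, hsUq]
    exact hle (ctx.sur_br c)
  have part3 : ∀ h ∈ smulHOM B (HOML ap sUq 𝓟 𝒰q) tw,
      ∃ f ∈ smulHOM B (HOML ap sU 𝓟 𝒰) tw, π.comp f = h := by
    intro h hh
    let SH : AddSubgroup (P →+ (U ⧸ torsionL hU)) :=
      { carrier := {h | ∃ f ∈ smulHOM B (HOML ap sU 𝓟 𝒰) tw, π.comp f = h}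
        zero_mem' := ⟨0, zero_mem _, by ext p; simp⟩
        add_mem' := by
          rintro h h' ⟨f, hf, rfl⟩ ⟨f', hf', rfl⟩
          exact ⟨f + f', add_mem hf hf', by ext p; simp⟩
        neg_mem' := by
          rintro h ⟨f, hf, rfl⟩
          exact ⟨-f, neg_mem hf, by ext p; simp⟩ }
    have hle : smulHOM B (HOML ap sUq 𝓟 𝒰q) tw ≤ SH := by
      refine (AddSubgroup.closure_le SH).mpr ?_
      rintro g ⟨c, k, hk, hgk⟩
      obtain ⟨f, hf, hfk⟩ := surj_gen c k (HOMLq_lin k hk)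
      refine ⟨f, hf, ?_⟩
      ext m
      rw [AddMonoidHom.comp_apply, hfk m, ← hgk m]
    exact hle hh
  -- Part 4: gradings
  have part4 : ∀ (σ : Γ) (f : P →+ U),
      f ∈ smulHOM B (HOML ap sU 𝓟 𝒰) tw → IsDegL 𝓟 𝒰 σ f →
      IsDegL 𝓟 𝒰q σ (π.comp f) := by
    intro σ f _ hdeg τ m hm
    exact AddSubgroup.mem_map.mpr ⟨f m, hdeg τ m hm, rfl⟩
  exact ⟨part1, part2, part3, part4⟩
end

section
/- Let (A,B,P,Q,μ,ν) be a graded Morita context with idempotent graded rings, unital bimodules, and surjective trace maps. Then the canonical ring homomorphism A → END(_B Q) given by right multiplication induces a graded ring isomorphism A/l(A) ≅ A·END(_B Q), where l(A) = {a ∈ A : Aa = 0} is the left torsion of A. -/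
/-!
Common infrastructure: non-unital (graded) rings, non-unital graded modules
(given by explicit action functions), graded homomorphisms of all degrees,
traces, torsion submodules, balanced tensor products, and graded Morita
contexts, following Dokuchaev–Simón, "Graded Equivalence for Graded
Idempotent Rings".
-/

open DirectSum

universe u v

variable {Γ : Type v} {A B P Q : Type u} [Group Γ] [DecidableEq Γ]
    [NonUnitalRing A] [NonUnitalRing B] [AddCommGroup P] [AddCommGroup Q]
    {𝒜 : Γ → AddSubgroup A} {ℬ : Γ → AddSubgroup B}
    {𝓟 : Γ → AddSubgroup P} {𝒬 : Γ → AddSubgroup Q}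
    {ap : A → P → P} {pb : P → B → P} {bq : B → Q → Q} {qa : Q → A → Q}
    {pr : P → Q → A} {br : Q → P → B}


section AuxProof

variable {Γ : Type v} {A B P Q : Type u} [Group Γ] [DecidableEq Γ]
    [NonUnitalRing A] [NonUnitalRing B] [AddCommGroup P] [AddCommGroup Q]
    {𝒜 : Γ → AddSubgroup A} {ℬ : Γ → AddSubgroup B}
    {𝓟 : Γ → AddSubgroup P} {𝒬 : Γ → AddSubgroup Q}
    {ap : A → P → P} {pb : P → B → P} {bq : B → Q → Q} {qa : Q → A → Q}
    {pr : P → Q → A} {br : Q → P → B}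

lemma qa_zero (ctx : GMoritaCtx Γ A B P Q 𝒜 ℬ 𝓟 𝒬 ap pb bq qa pr br)
    (q : Q) : qa q (0 : A) = 0 := by
  have h := ctx.rmodQ.smul_add q 0 0
  rw [add_zero] at h
  exact (left_eq_add.mp h)

lemma qa_neg (ctx : GMoritaCtx Γ A B P Q 𝒜 ℬ 𝓟 𝒬 ap pb bq qa pr br)
    (q : Q) (a : A) : qa q (-a) = -(qa q a) := by
  have h := ctx.rmodQ.smul_add q a (-a)
  rw [add_neg_cancel, qa_zero ctx] at h
  exact eq_neg_of_add_eq_zero_left (by rw [add_comm]; exact h.symm)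

lemma bq_zero (ctx : GMoritaCtx Γ A B P Q 𝒜 ℬ 𝓟 𝒬 ap pb bq qa pr br)
    (b : B) : bq b (0 : Q) = 0 := by
  have h := ctx.lmodQ.smul_add b 0 0
  rw [add_zero] at h
  exact (left_eq_add.mp h)

lemma bq_neg (ctx : GMoritaCtx Γ A B P Q 𝒜 ℬ 𝓟 𝒬 ap pb bq qa pr br)
    (b : B) (q : Q) : bq b (-q) = -(bq b q) := by
  have h := ctx.lmodQ.smul_add b q (-q)
  rw [add_neg_cancel, bq_zero ctx] at h
  exact eq_neg_of_add_eq_zero_left (by rw [add_comm]; exact h.symm)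

lemma pr_zero_right (ctx : GMoritaCtx Γ A B P Q 𝒜 ℬ 𝓟 𝒬 ap pb bq qa pr br)
    (p : P) : pr p (0 : Q) = 0 := by
  have h := ctx.pr_addr p 0 0
  rw [add_zero] at h
  exact (left_eq_add.mp h)

/-- Every element of `HOML bq bq 𝒬 𝒬` is `B`-linear. -/
lemma homl_linear (ctx : GMoritaCtx Γ A B P Q 𝒜 ℬ 𝓟 𝒬 ap pb bq qa pr br)
    (f : Q →+ Q) (hf : f ∈ HOML (A := B) bq bq 𝒬 𝒬) :
    IsLinL bq bq f := by
  refine AddSubgroup.closure_induction (p := fun g _ => IsLinL bq bq g)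
    ?_ ?_ ?_ ?_ hf
  · intro g hg; exact hg.1
  · intro b m
    simp [bq_zero ctx]
  · intro g h _ _ hg hh
    intro b m
    simp [hg b m, hh b m, ctx.lmodQ.smul_add]
  · intro g _ hg
    intro b m
    simp [hg b m, bq_neg ctx]

/-- Key lemma: for any `c : A` and `B`-linear `f : Q →+ Q`, there is `a : A`
with `f (q·c) = q·a` for all `q`. -/
lemma exists_rmul (ctx : GMoritaCtx Γ A B P Q 𝒜 ℬ 𝓟 𝒬 ap pb bq qa pr br)
    (f : Q →+ Q) (hlin : IsLinL bq bq f) (c : A) :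
    ∃ a : A, ∀ q : Q, f (qa q c) = qa q a := by
  refine AddSubgroup.closure_induction
    (p := fun c _ => ∃ a : A, ∀ q : Q, f (qa q c) = qa q a) ?_ ?_ ?_ ?_ (ctx.sur_pr c)
  · rintro x ⟨p, q0, rfl⟩
    refine ⟨pr p (f q0), fun q => ?_⟩
    rw [ctx.assoc2, hlin, ← ctx.assoc2]
  · exact ⟨0, fun q => by simp [qa_zero ctx]⟩
  · rintro x y _ _ ⟨a, ha⟩ ⟨a', ha'⟩
    refine ⟨a + a', fun q => ?_⟩
    rw [ctx.rmodQ.smul_add, map_add, ha, ha', ctx.rmodQ.smul_add]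
  · rintro x _ ⟨a, ha⟩
    refine ⟨-a, fun q => ?_⟩
    rw [qa_neg ctx, map_neg, ha, qa_neg ctx]

end AuxProof

/-- Right multiplication `ρ(a) : Q →+ Q`, `x ↦ x·a`. -/
def rmulQ (ctx : GMoritaCtx Γ A B P Q 𝒜 ℬ 𝓟 𝒬 ap pb bq qa pr br) (a : A) : Q →+ Q :=
  AddMonoidHom.mk' (fun x => qa x a) (fun x y => ctx.rmodQ.add_smul x y a)

/-- For a graded Morita context with idempotent graded
rings, unital bimodules and surjective trace maps, the canonical homomorphism
`A → END(_B Q)` by right multiplication induces a graded ring isomorphism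
`A/l(A) ≅ A·END(_B Q)`: right multiplication is additive, anti-multiplicative
(i.e. a homomorphism for the endomorphism composition written opposite),
graded, lands in and surjects onto `A·END(_B Q)`, and its kernel is exactly
the left torsion `l(A) = {a | Aa = 0}`. -/
theorem A_mod_torsion_iso_AEND
    [DirectSum.Decomposition 𝒜] [DirectSum.Decomposition ℬ]
    [DirectSum.Decomposition 𝓟] [DirectSum.Decomposition 𝒬]
    (ctx : GMoritaCtx Γ A B P Q 𝒜 ℬ 𝓟 𝒬 ap pb bq qa pr br) :
    -- `ρ(a)` lies in `A·END(_B Q)`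
    (∀ a : A, rmulQ ctx a ∈
      smulHOM A (HOML bq bq 𝒬 𝒬) (fun (a : A) (x : Q) => qa x a)) ∧
    -- `ρ` is additive
    (∀ a a' : A, rmulQ ctx (a + a') = rmulQ ctx a + rmulQ ctx a') ∧
    -- `ρ` is multiplicative (endomorphisms act on the opposite side)
    (∀ a a' : A, rmulQ ctx (a * a') = (rmulQ ctx a').comp (rmulQ ctx a)) ∧
    -- `ρ` is graded of degree `e`
    (∀ σ : Γ, ∀ a ∈ 𝒜 σ, IsDegL 𝒬 𝒬 σ (rmulQ ctx a)) ∧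
    -- the kernel of `ρ` is exactly `l(A)`
    (∀ a : A, rmulQ ctx a = 0 ↔ (∀ x : A, x * a = 0)) ∧
    -- `ρ` is surjective onto `A·END(_B Q)`
    (∀ g ∈ smulHOM A (HOML bq bq 𝒬 𝒬) (fun (a : A) (x : Q) => qa x a),
      ∃ a : A, rmulQ ctx a = g) := by
  have hadd : ∀ a a' : A, rmulQ ctx (a + a') = rmulQ ctx a + rmulQ ctx a' := by
    intro a a'
    ext q
    exact ctx.rmodQ.smul_add q a a'
  refine ⟨?_, hadd, ?_, ?_, ?_, ?_⟩
  · -- membership in A·END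
    intro a
    refine AddSubgroup.subset_closure ?_
    exact ⟨a, AddMonoidHom.id Q,
      AddSubgroup.subset_closure ⟨fun b q => rfl, 1, fun τ m hm => by simpa using hm⟩,
      fun m => rfl⟩
  · -- multiplicativity
    intro a a'
    ext q
    exact ctx.rmodQ.smul_mul q a a'
  · -- gradedness
    intro σ a ha τ m hm
    exact ctx.gradeQr hm ha
  · -- kernel
    intro a
    constructor
    · intro h x
      have hq : ∀ q : Q, qa q a = 0 := fun q =>
        congrFun (congrArg (fun f => f.toFun) h) q
      refine AddSubgroup.closure_induction (p := fun x _ => x * a = 0)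
        ?_ ?_ ?_ ?_ (ctx.sur_pr x)
      · rintro x ⟨p, q, rfl⟩
        rw [← ctx.pr_linr, hq, pr_zero_right ctx]
      · exact zero_mul a
      · intro x y _ _ hx hy; rw [add_mul, hx, hy, add_zero]
      · intro x _ hx; rw [neg_mul, hx, neg_zero]
    · intro h
      ext q
      show qa q a = 0
      refine AddSubgroup.closure_induction (p := fun q _ => qa q a = 0)
        ?_ ?_ ?_ ?_ (ctx.unitalQr q)
      · rintro x ⟨q', b, rfl⟩
        rw [← ctx.rmodQ.smul_mul, h b, qa_zero ctx]
      · have h0 := ctx.rmodQ.add_smul 0 0 a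
        rw [add_zero] at h0
        exact (left_eq_add.mp h0)
      · intro x y _ _ hx hy
        rw [ctx.rmodQ.add_smul, hx, hy, add_zero]
      · intro x _ hx
        have h0 : qa (0 : Q) a = 0 := by
          have h0 := ctx.rmodQ.add_smul 0 0 a
          rw [add_zero] at h0
          exact (left_eq_add.mp h0)
        have h1 := ctx.rmodQ.add_smul x (-x) a
        rw [add_neg_cancel, h0, hx, zero_add] at h1
        exact h1.symm
  · -- surjectivity
    intro g hg
    refine AddSubgroup.closure_induction (p := fun g _ => ∃ a : A, rmulQ ctx a = g)
      ?_ ?_ ?_ ?_ hg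
    · rintro g ⟨c, f, hf, hgf⟩
      obtain ⟨a, ha⟩ := exists_rmul ctx f (homl_linear ctx f hf) c
      refine ⟨a, ?_⟩
      ext q
      show qa q a = g q
      rw [hgf q, ha q]
    · exact ⟨0, by ext q; exact qa_zero ctx q⟩
    · rintro x y _ _ ⟨a, rfl⟩ ⟨a', rfl⟩
      exact ⟨a + a', hadd a a'⟩
    · rintro x _ ⟨a, rfl⟩
      exact ⟨-a, by ext q; exact qa_neg ctx q a⟩
end

section
/- Let A, B be idempotent torsion-free graded rings with a graded Morita context (A,B,P,Q,⟨−,−⟩,[−,−]) having surjective trace maps. Then the assignments I ↦ [QI, P] and J ↦ ⟨PJ, Q⟩ define mutually inverse lattice isomorphisms between the lattice T_A of unital graded two-sided ideals of A (I with AI = IA = I) and the lattice T_B of unital graded two-sided ideals of B. -/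
/-!
Common infrastructure: non-unital (graded) rings, non-unital graded modules
(given by explicit action functions), graded homomorphisms of all degrees,
traces, torsion submodules, balanced tensor products, and graded Morita
contexts, following Dokuchaev–Simón, "Graded Equivalence for Graded
Idempotent Rings".
-/

open DirectSum

universe u v

/-- A unital graded two-sided ideal of the graded ring `A`:  a two-sided
ideal `I` with `AI = IA = I` which contains the homogeneous components of
its elements. -/
def IsTIdeal {Γ A : Type*} [Group Γ] [DecidableEq Γ] [NonUnitalRing A]
    (𝒜 : Γ → AddSubgroup A) [DirectSum.Decomposition 𝒜]
    (I : AddSubgroup A) : Prop :=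
  (∀ a : A, ∀ i ∈ I, a * i ∈ I) ∧ (∀ i ∈ I, ∀ a : A, i * a ∈ I) ∧
  (∀ i ∈ I, i ∈ AddSubgroup.closure {x : A | ∃ a : A, ∃ j ∈ I, x = a * j}) ∧
  (∀ i ∈ I, i ∈ AddSubgroup.closure {x : A | ∃ j ∈ I, ∃ a : A, x = j * a}) ∧
  (∀ i ∈ I, ∀ σ : Γ, ((DirectSum.decompose 𝒜 i) σ : A) ∈ I)

/-- `I ↦ [QI,P]`. -/
def idealToB {A B P Q : Type*} [NonUnitalRing A] [NonUnitalRing B]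
    [AddCommGroup P] [AddCommGroup Q]
    (qa : Q → A → Q) (br : Q → P → B) (I : AddSubgroup A) : AddSubgroup B :=
  AddSubgroup.closure {x : B | ∃ q : Q, ∃ i ∈ I, ∃ p : P, x = br (qa q i) p}

/-- `J ↦ ⟨PJ,Q⟩`. -/
def idealToA {A B P Q : Type*} [NonUnitalRing A] [NonUnitalRing B]
    [AddCommGroup P] [AddCommGroup Q]
    (pb : P → B → P) (pr : P → Q → A) (J : AddSubgroup B) : AddSubgroup A :=
  AddSubgroup.closure {x : A | ∃ p : P, ∃ j ∈ J, ∃ q : Q, x = pr (pb p j) q}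

section Aux

open AddSubgroup

variable {Γ : Type*} {A B P Q : Type*} [Group Γ]
    [NonUnitalRing A] [NonUnitalRing B] [AddCommGroup P] [AddCommGroup Q]
    {𝒜 : Γ → AddSubgroup A} {ℬ : Γ → AddSubgroup B}
    {𝓟 : Γ → AddSubgroup P} {𝒬 : Γ → AddSubgroup Q}
    {ap : A → P → P} {pb : P → B → P} {bq : B → Q → Q} {qa : Q → A → Q}
    {pr : P → Q → A} {br : Q → P → B}

/-- The symmetric Morita context, swapping the roles of `A` and `B`. -/
def GMoritaCtx.symm (ctx : GMoritaCtx Γ A B P Q 𝒜 ℬ 𝓟 𝒬 ap pb bq qa pr br) :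
    GMoritaCtx Γ B A Q P ℬ 𝒜 𝒬 𝓟 bq qa ap pb br pr where
  gradeA := ctx.gradeB
  gradeB := ctx.gradeA
  idemA := ctx.idemB
  idemB := ctx.idemA
  lmodP := ctx.lmodQ
  rmodP := ctx.rmodQ
  bimodP := ctx.bimodQ
  lmodQ := ctx.lmodP
  rmodQ := ctx.rmodP
  bimodQ := ctx.bimodP
  unitalPl := ctx.unitalQl
  unitalPr := ctx.unitalQr
  unitalQl := ctx.unitalPl
  unitalQr := ctx.unitalPr
  gradePl := ctx.gradeQl
  gradePr := ctx.gradeQr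
  gradeQl := ctx.gradePl
  gradeQr := ctx.gradePr
  pr_addl := ctx.br_addl
  pr_addr := ctx.br_addr
  br_addl := ctx.pr_addl
  br_addr := ctx.pr_addr
  pr_bal := ctx.br_bal
  br_bal := ctx.pr_bal
  pr_linl := ctx.br_linl
  pr_linr := ctx.br_linr
  br_linl := ctx.pr_linl
  br_linr := ctx.pr_linr
  pr_graded := ctx.br_graded
  br_graded := ctx.pr_graded
  assoc1 := ctx.assoc2
  assoc2 := ctx.assoc1
  sur_pr := ctx.sur_br
  sur_br := ctx.sur_pr

variable [DecidableEq Γ]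

/-- `I ↦ [QI, P]` maps unital graded two-sided ideals to unital graded
two-sided ideals. -/
theorem toB_tideal [DirectSum.Decomposition 𝒜] [DirectSum.Decomposition ℬ]
    [DirectSum.Decomposition 𝓟] [DirectSum.Decomposition 𝒬]
    (ctx : GMoritaCtx Γ A B P Q 𝒜 ℬ 𝓟 𝒬 ap pb bq qa pr br)
    (I : AddSubgroup A) (hI : IsTIdeal 𝒜 I) : IsTIdeal ℬ (idealToB qa br I) := by
  set J := idealToB qa br I with hJdef
  refine ⟨?_, ?_, ?_, ?_, ?_⟩
  · -- left ideal
    intro b j hj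
    have hle : J ≤ J.comap (AddMonoidHom.mulLeft b) := by
      refine (closure_le _).mpr ?_
      rintro x ⟨q, i, hi, p, rfl⟩
      rw [SetLike.mem_coe, AddSubgroup.mem_comap]
      show b * br (qa q i) p ∈ J
      rw [← ctx.br_linl, ← ctx.bimodQ]
      exact subset_closure ⟨_, _, hi, _, rfl⟩
    exact AddSubgroup.mem_comap.mp (hle hj)
  · -- right ideal
    intro j hj b
    have hle : J ≤ J.comap (AddMonoidHom.mulRight b) := by
      refine (closure_le _).mpr ?_
      rintro x ⟨q, i, hi, p, rfl⟩
      rw [SetLike.mem_coe, AddSubgroup.mem_comap]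
      show br (qa q i) p * b ∈ J
      rw [← ctx.br_linr]
      exact subset_closure ⟨_, _, hi, _, rfl⟩
    exact AddSubgroup.mem_comap.mp (hle hj)
  · -- left unital
    intro j hj
    set K := AddSubgroup.closure {x : B | ∃ b : B, ∃ j' ∈ J, x = b * j'} with hK
    have hle : J ≤ K := by
      refine (closure_le _).mpr ?_
      rintro x ⟨q, i, hi, p, rfl⟩
      have f1 : A →+ B := AddMonoidHom.mk' (fun i => br (qa q i) p)
        (fun x y => by simp only [ctx.rmodQ.smul_add, ctx.br_addl])
      have h1 : AddSubgroup.closure {x : A | ∃ a : A, ∃ j₁ ∈ I, x = a * j₁} ≤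
          K.comap (AddMonoidHom.mk' (fun i => br (qa q i) p)
            (fun x y => by simp only [ctx.rmodQ.smul_add, ctx.br_addl])) := by
        refine (closure_le _).mpr ?_
        rintro x ⟨a, j₁, hj₁, rfl⟩
        rw [SetLike.mem_coe, AddSubgroup.mem_comap]
        show br (qa q (a * j₁)) p ∈ K
        have h2 : AddSubgroup.closure {x : A | ∃ (p' : P) (q' : Q), x = pr p' q'} ≤
            K.comap (AddMonoidHom.mk' (fun a => br (qa q (a * j₁)) p)
              (fun x y => by simp only [add_mul, ctx.rmodQ.smul_add, ctx.br_addl])) := by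
          refine (closure_le _).mpr ?_
          rintro x ⟨p', q', rfl⟩
          rw [SetLike.mem_coe, AddSubgroup.mem_comap]
          show br (qa q (pr p' q' * j₁)) p ∈ K
          rw [ctx.rmodQ.smul_mul, ctx.assoc2, ctx.bimodQ, ctx.br_linl]
          exact subset_closure
            ⟨br q p', br (qa q' j₁) p, subset_closure ⟨q', j₁, hj₁, p, rfl⟩, rfl⟩
        exact AddSubgroup.mem_comap.mp (h2 (ctx.sur_pr a))
      exact AddSubgroup.mem_comap.mp (h1 (hI.2.2.1 i hi))
    exact hle hj
  · -- right unital
    intro j hj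
    set K := AddSubgroup.closure {x : B | ∃ j' ∈ J, ∃ b : B, x = j' * b} with hK
    have hle : J ≤ K := by
      refine (closure_le _).mpr ?_
      rintro x ⟨q, i, hi, p, rfl⟩
      have h1 : AddSubgroup.closure {x : A | ∃ j₁ ∈ I, ∃ a : A, x = j₁ * a} ≤
          K.comap (AddMonoidHom.mk' (fun i => br (qa q i) p)
            (fun x y => by simp only [ctx.rmodQ.smul_add, ctx.br_addl])) := by
        refine (closure_le _).mpr ?_
        rintro x ⟨j₁, hj₁, a, rfl⟩
        rw [SetLike.mem_coe, AddSubgroup.mem_comap]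
        show br (qa q (j₁ * a)) p ∈ K
        have h2 : AddSubgroup.closure {x : A | ∃ (p' : P) (q' : Q), x = pr p' q'} ≤
            K.comap (AddMonoidHom.mk' (fun a => br (qa q (j₁ * a)) p)
              (fun x y => by simp only [mul_add, ctx.rmodQ.smul_add, ctx.br_addl])) := by
          refine (closure_le _).mpr ?_
          rintro x ⟨p', q', rfl⟩
          rw [SetLike.mem_coe, AddSubgroup.mem_comap]
          show br (qa q (j₁ * pr p' q')) p ∈ K
          rw [ctx.rmodQ.smul_mul, ctx.assoc2, ctx.br_linl]
          exact subset_closure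
            ⟨br (qa q j₁) p', subset_closure ⟨q, j₁, hj₁, p', rfl⟩, br q' p, rfl⟩
        exact AddSubgroup.mem_comap.mp (h2 (ctx.sur_pr a))
      exact AddSubgroup.mem_comap.mp (h1 (hI.2.2.2.1 i hi))
    exact hle hj
  · -- graded
    classical
    set K : AddSubgroup B := ⨅ σ : Γ, J.comap (AddMonoidHom.mk'
      (fun b => ((DirectSum.decompose ℬ b) σ : B)) (fun x y => by simp)) with hKdef
    have hle : J ≤ K := by
      refine (closure_le _).mpr ?_
      rintro x ⟨q, i, hi, p, rfl⟩
      have f1 : Q →+ B := AddMonoidHom.mk' (fun q => br (qa q i) p)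
        (fun x y => by simp only [ctx.rmodQ.add_smul, ctx.br_addl])
      have hq := DirectSum.sum_support_decompose 𝒬 q
      have e1 : br (qa q i) p =
          ∑ σ ∈ (DirectSum.decompose 𝒬 q).support,
            br (qa ((DirectSum.decompose 𝒬 q) σ : Q) i) p := by
        conv_lhs => rw [← hq]
        exact map_sum (AddMonoidHom.mk' (fun q => br (qa q i) p)
          (fun x y => by simp only [ctx.rmodQ.add_smul, ctx.br_addl])) _ _
      rw [SetLike.mem_coe, e1]
      refine AddSubgroup.sum_mem _ fun σ hσ => ?_
      have hi' := DirectSum.sum_support_decompose 𝒜 i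
      have e2 : br (qa ((DirectSum.decompose 𝒬 q) σ : Q) i) p =
          ∑ τ ∈ (DirectSum.decompose 𝒜 i).support,
            br (qa ((DirectSum.decompose 𝒬 q) σ : Q)
              ((DirectSum.decompose 𝒜 i) τ : A)) p := by
        conv_lhs => rw [← hi']
        exact map_sum (AddMonoidHom.mk'
          (fun i => br (qa ((DirectSum.decompose 𝒬 q) σ : Q) i) p)
          (fun x y => by simp only [ctx.rmodQ.smul_add, ctx.br_addl])) _ _
      rw [e2]
      refine AddSubgroup.sum_mem _ fun τ hτ => ?_
      have hp := DirectSum.sum_support_decompose 𝓟 p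
      have e3 : br (qa ((DirectSum.decompose 𝒬 q) σ : Q)
            ((DirectSum.decompose 𝒜 i) τ : A)) p =
          ∑ ρ ∈ (DirectSum.decompose 𝓟 p).support,
            br (qa ((DirectSum.decompose 𝒬 q) σ : Q)
              ((DirectSum.decompose 𝒜 i) τ : A))
              ((DirectSum.decompose 𝓟 p) ρ : P) := by
        conv_lhs => rw [← hp]
        exact map_sum (AddMonoidHom.mk'
          (fun p => br (qa ((DirectSum.decompose 𝒬 q) σ : Q)
            ((DirectSum.decompose 𝒜 i) τ : A)) p)
          (fun x y => by simp only [ctx.br_addr])) _ _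
      rw [e3]
      refine AddSubgroup.sum_mem _ fun ρ hρ => ?_
      -- a homogeneous generator
      set t := br (qa ((DirectSum.decompose 𝒬 q) σ : Q)
        ((DirectSum.decompose 𝒜 i) τ : A)) ((DirectSum.decompose 𝓟 p) ρ : P) with ht
      have htd : t ∈ ℬ (σ * τ * ρ) :=
        ctx.br_graded (ctx.gradeQr (SetLike.coe_mem _) (SetLike.coe_mem _))
          (SetLike.coe_mem _)
      have htJ : t ∈ J := subset_closure ⟨_, _, hI.2.2.2.2 i hi τ, _, rfl⟩
      rw [hKdef, AddSubgroup.mem_iInf]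
      intro σ₀
      rw [AddSubgroup.mem_comap]
      show ((DirectSum.decompose ℬ t) σ₀ : B) ∈ J
      by_cases h : σ₀ = σ * τ * ρ
      · rw [h, DirectSum.decompose_of_mem_same ℬ htd]; exact htJ
      · rw [DirectSum.decompose_of_mem_ne ℬ htd (fun hh => h hh.symm)]
        exact J.zero_mem
    intro j hj σ
    have := hle hj
    rw [hKdef, AddSubgroup.mem_iInf] at this
    exact AddSubgroup.mem_comap.mp (this σ)

/-- `⟨P·[Q·I,P],Q⟩ = I` for a unital graded two-sided ideal `I`. -/
theorem comp_eq [DirectSum.Decomposition 𝒜]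
    (ctx : GMoritaCtx Γ A B P Q 𝒜 ℬ 𝓟 𝒬 ap pb bq qa pr br)
    (I : AddSubgroup A) (hI : IsTIdeal 𝒜 I) :
    idealToA pb pr (idealToB qa br I) = I := by
  set J := idealToB qa br I with hJdef
  refine le_antisymm ?_ ?_
  · refine (closure_le _).mpr ?_
    rintro x ⟨p, j, hj, q, rfl⟩
    have hle : J ≤ I.comap (AddMonoidHom.mk' (fun j => pr (pb p j) q)
        (fun x y => by simp only [ctx.rmodP.smul_add, ctx.pr_addl])) := by
      refine (closure_le _).mpr ?_
      rintro x ⟨q', i, hi, p', rfl⟩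
      rw [SetLike.mem_coe, AddSubgroup.mem_comap]
      show pr (pb p (br (qa q' i) p')) q ∈ I
      rw [ctx.assoc1, ctx.pr_linl, ctx.pr_linr]
      exact hI.2.1 _ (hI.1 _ i hi) _
    exact AddSubgroup.mem_comap.mp (hle hj)
  · intro i hi
    set K := idealToA pb pr J with hKdef
    have h0 := hI.2.2.1 i hi
    have hle : AddSubgroup.closure {x : A | ∃ a : A, ∃ j₁ ∈ I, x = a * j₁} ≤ K := by
      refine (closure_le _).mpr ?_
      rintro x ⟨a, j, hj, rfl⟩
      have h1 : AddSubgroup.closure {x : A | ∃ (p : P) (q : Q), x = pr p q} ≤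
          K.comap (AddMonoidHom.mulRight j) := by
        refine (closure_le _).mpr ?_
        rintro x ⟨p, q, rfl⟩
        rw [SetLike.mem_coe, AddSubgroup.mem_comap]
        show pr p q * j ∈ K
        have h2 : AddSubgroup.closure {x : A | ∃ j₁ ∈ I, ∃ a : A, x = j₁ * a} ≤
            K.comap (AddMonoidHom.mulLeft (pr p q)) := by
          refine (closure_le _).mpr ?_
          rintro x ⟨j₁, hj₁, a, rfl⟩
          rw [SetLike.mem_coe, AddSubgroup.mem_comap]
          show pr p q * (j₁ * a) ∈ K
          have h3 : AddSubgroup.closure {x : A | ∃ (p' : P) (q' : Q), x = pr p' q'} ≤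
              K.comap (AddMonoidHom.mk' (fun a => pr p q * (j₁ * a))
                (fun x y => by simp only [mul_add, mul_add])) := by
            refine (closure_le _).mpr ?_
            rintro x ⟨p', q', rfl⟩
            rw [SetLike.mem_coe, AddSubgroup.mem_comap]
            show pr p q * (j₁ * pr p' q') ∈ K
            rw [← ctx.pr_linr, ctx.rmodQ.smul_mul, ctx.assoc2, ← ctx.pr_bal]
            exact subset_closure
              ⟨p, br (qa q j₁) p', subset_closure ⟨q, j₁, hj₁, p', rfl⟩, q', rfl⟩
          exact AddSubgroup.mem_comap.mp (h3 (ctx.sur_pr a))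
        exact AddSubgroup.mem_comap.mp (h2 (hI.2.2.2.1 j hj))
      exact AddSubgroup.mem_comap.mp (h1 (ctx.sur_pr a))
    exact hle h0

theorem toB_mono (I I' : AddSubgroup A) (h : I ≤ I') :
    idealToB qa br I ≤ idealToB (B := B) (P := P) qa br I' := by
  refine AddSubgroup.closure_mono ?_
  rintro x ⟨q, i, hi, p, rfl⟩
  exact ⟨q, i, h hi, p, rfl⟩

end Aux

/-- For graded-equivalent idempotent torsion-free graded
rings `A`, `B` with Morita context having surjective trace maps, the maps
`I ↦ [QI,P]` and `J ↦ ⟨PJ,Q⟩` are mutually inverse monotone bijections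
(lattice isomorphisms) between the lattices of unital graded two-sided ideals
of `A` and of `B`. -/
theorem ideal_lattice_isomorphism
    {Γ : Type v} {A B P Q : Type u} [Group Γ] [DecidableEq Γ]
    [NonUnitalRing A] [NonUnitalRing B] [AddCommGroup P] [AddCommGroup Q]
    (𝒜 : Γ → AddSubgroup A) (ℬ : Γ → AddSubgroup B)
    (𝓟 : Γ → AddSubgroup P) (𝒬 : Γ → AddSubgroup Q)
    [DirectSum.Decomposition 𝒜] [DirectSum.Decomposition ℬ]
    [DirectSum.Decomposition 𝓟] [DirectSum.Decomposition 𝒬]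
    (ap : A → P → P) (pb : P → B → P) (bq : B → Q → Q) (qa : Q → A → Q)
    (pr : P → Q → A) (br : Q → P → B)
    (ctx : GMoritaCtx Γ A B P Q 𝒜 ℬ 𝓟 𝒬 ap pb bq qa pr br)
    (hAl : IsTorsionFreeL (fun a x : A => a * x))
    (hAr : IsTorsionFreeR (fun x a : A => x * a))
    (hBl : IsTorsionFreeL (fun b x : B => b * x))
    (hBr : IsTorsionFreeR (fun x b : B => x * b))
    (hPl : IsTorsionFreeL ap) (hPr : IsTorsionFreeR pb)
    (hQl : IsTorsionFreeL bq) (hQr : IsTorsionFreeR qa) :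
    -- `[Q·-,P]` sends `T_A` to `T_B`
    (∀ I : AddSubgroup A, IsTIdeal 𝒜 I → IsTIdeal ℬ (idealToB qa br I)) ∧
    -- `⟨P·-,Q⟩` sends `T_B` to `T_A`
    (∀ J : AddSubgroup B, IsTIdeal ℬ J → IsTIdeal 𝒜 (idealToA pb pr J)) ∧
    -- the two maps are mutually inverse
    (∀ I : AddSubgroup A, IsTIdeal 𝒜 I → idealToA pb pr (idealToB qa br I) = I) ∧
    (∀ J : AddSubgroup B, IsTIdeal ℬ J → idealToB qa br (idealToA pb pr J) = J) ∧
    -- and they are monotone (so they are lattice isomorphisms)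
    (∀ I I' : AddSubgroup A, I ≤ I' → idealToB qa br I ≤ idealToB qa br I') ∧
    (∀ J J' : AddSubgroup B, J ≤ J' → idealToA pb pr J ≤ idealToA pb pr J') :=
  ⟨fun I hI => toB_tideal ctx I hI,
   fun J hJ => toB_tideal ctx.symm J hJ,
   fun I hI => comp_eq ctx I hI,
   fun J hJ => comp_eq ctx.symm J hJ,
   fun I I' h => toB_mono I I' h,
   fun J J' h => toB_mono (qa := pb) (br := pr) J J' h⟩
end

section
/- Let A, B be idempotent torsion-free graded rings with a graded Morita context (A,B,P,Q,⟨−,−⟩,[−,−]) having surjective trace maps and torsion-free unital bimodules. If M is a faithful unital torsion-free graded left A-module, then B·HOM_A(P,M) is a faithful left B-module. -/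
/-!
Common infrastructure: non-unital (graded) rings, non-unital graded modules
(given by explicit action functions), graded homomorphisms of all degrees,
traces, torsion submodules, balanced tensor products, and graded Morita
contexts, following Dokuchaev–Simón, "Graded Equivalence for Graded
Idempotent Rings".
-/

open DirectSum

universe u v

/-- Let `A`, `B` be idempotent torsion-free graded rings
with a graded Morita context having surjective trace maps and torsion-free
unital bimodules.  If `M` is a faithful unital torsion-free graded left
`A`-module, then `B·HOM_A(P,M)` is a faithful left `B`-module (with
`(b·f)(p) = f(pb)`). -/
theorem BHOM_faithful
    {Γ : Type v} {A B P Q M : Type u} [Group Γ] [DecidableEq Γ]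
    [NonUnitalRing A] [NonUnitalRing B] [AddCommGroup P] [AddCommGroup Q]
    [AddCommGroup M]
    (𝒜 : Γ → AddSubgroup A) (ℬ : Γ → AddSubgroup B)
    (𝓟 : Γ → AddSubgroup P) (𝒬 : Γ → AddSubgroup Q) (ℳ : Γ → AddSubgroup M)
    [DirectSum.Decomposition 𝒜] [DirectSum.Decomposition ℬ]
    [DirectSum.Decomposition 𝓟] [DirectSum.Decomposition 𝒬]
    [DirectSum.Decomposition ℳ]
    (ap : A → P → P) (pb : P → B → P) (bq : B → Q → Q) (qa : Q → A → Q)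
    (pr : P → Q → A) (br : Q → P → B)
    (ctx : GMoritaCtx Γ A B P Q 𝒜 ℬ 𝓟 𝒬 ap pb bq qa pr br)
    (hAl : IsTorsionFreeL (fun a x : A => a * x))
    (hAr : IsTorsionFreeR (fun x a : A => x * a))
    (hBl : IsTorsionFreeL (fun b x : B => b * x))
    (hBr : IsTorsionFreeR (fun x b : B => x * b))
    (hPl : IsTorsionFreeL ap) (hPr : IsTorsionFreeR pb)
    (hQl : IsTorsionFreeL bq) (hQr : IsTorsionFreeR qa)
    (sM : A → M → M) (hM : IsLMod A M sM) (hMu : IsUnitalL sM)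
    (hMtf : IsTorsionFreeL sM) (hMg : IsGModL 𝒜 ℳ sM)
    -- `M` is faithful
    (hfaith : ∀ a : A, (∀ m : M, sM a m = 0) → a = 0) :
    -- then `B·HOM_A(P,M)` is faithful as a left `B`-module
    ∀ b : B,
      (∀ f ∈ smulHOM B (HOML ap sM 𝓟 ℳ) (fun (b : B) (p : P) => pb p b),
        ∀ p : P, f (pb p b) = 0) → b = 0 := by
  intro b hb
  -- basic zero lemmas
  have ap0 : ∀ p : P, ap 0 p = 0 := by
    intro p
    have h := ctx.lmodP.add_smul 0 0 p
    rw [add_zero] at h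
    exact left_eq_add.mp h
  have sMz : ∀ m : M, sM 0 m = 0 := by
    intro m
    have h := hM.add_smul 0 0 m
    rw [add_zero] at h
    exact left_eq_add.mp h
  have sMz' : ∀ a : A, sM a 0 = 0 := by
    intro a
    have h := hM.smul_add a 0 0
    rw [add_zero] at h
    exact left_eq_add.mp h
  have pr0 : ∀ p : P, pr p 0 = 0 := by
    intro p
    have h := ctx.pr_addr p 0 0
    rw [add_zero] at h
    exact left_eq_add.mp h
  have br0 : ∀ q : Q, br q 0 = 0 := by
    intro q
    have h := ctx.br_addr q 0 0
    rw [add_zero] at h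
    exact left_eq_add.mp h
  -- the maps p ↦ sM (pr p q) m
  let F : Q → M → P →+ M := fun q m =>
    AddMonoidHom.mk' (fun p => sM (pr p q) m)
      (fun p p' => by
        show sM (pr (p + p') q) m = sM (pr p q) m + sM (pr p' q) m
        rw [ctx.pr_addl, hM.add_smul])
  have hF : ∀ (q : Q) (m : M), F q m ∈ HOML ap sM 𝓟 ℳ := by
    intro q
    induction q using DirectSum.Decomposition.inductionOn 𝒬 with
    | zero =>
      intro m
      have : F (0 : Q) m = 0 := by
        ext p
        show sM (pr p 0) m = 0
        rw [pr0, sMz]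
      rw [this]
      exact (HOML ap sM 𝓟 ℳ).zero_mem
    | add q q' hq hq' =>
      intro m
      have : F (q + q') m = F q m + F q' m := by
        ext p
        show sM (pr p (q + q')) m = sM (pr p q) m + sM (pr p q') m
        rw [ctx.pr_addr, hM.add_smul]
      rw [this]
      exact (HOML ap sM 𝓟 ℳ).add_mem (hq m) (hq' m)
    | homogeneous qh =>
      intro m
      induction m using DirectSum.Decomposition.inductionOn ℳ with
      | zero =>
        have : F (qh : Q) 0 = 0 := by
          ext p
          exact sMz' _
        rw [this]
        exact (HOML ap sM 𝓟 ℳ).zero_mem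
      | add m m' hm hm' =>
        have : F (qh : Q) (m + m') = F (qh : Q) m + F (qh : Q) m' := by
          ext p
          exact hM.smul_add _ m m'
        rw [this]
        exact (HOML ap sM 𝓟 ℳ).add_mem hm hm'
      | homogeneous mh =>
        rename_i τ ρ
        apply AddSubgroup.subset_closure
        constructor
        · intro a p
          show sM (pr (ap a p) (qh : Q)) (mh : M) = sM a (sM (pr p (qh : Q)) (mh : M))
          rw [ctx.pr_linl, hM.mul_smul]
        · refine ⟨τ * ρ, fun σ p hp => ?_⟩
          show sM (pr p (qh : Q)) (mh : M) ∈ ℳ (σ * (τ * ρ))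
          rw [← mul_assoc]
          exact hMg (ctx.pr_graded hp qh.2) mh.2
  -- key vanishing
  have key : ∀ (c : B) (q : Q) (p : P), pr (pb p (b * c)) q = 0 := by
    intro c q p
    apply hfaith
    intro m
    let g : P →+ M := AddMonoidHom.mk' (fun p' => (F q m) (pb p' c))
      (fun p' p'' => by
        show (F q m) (pb (p' + p'') c) = (F q m) (pb p' c) + (F q m) (pb p'' c)
        rw [ctx.rmodP.add_smul, map_add])
    have hg : g ∈ smulHOM B (HOML ap sM 𝓟 ℳ) (fun (b : B) (p : P) => pb p b) :=
      AddSubgroup.subset_closure ⟨c, F q m, hF q m, fun _ => rfl⟩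
    have := hb g hg p
    show sM (pr (pb p (b * c)) q) m = 0
    have hcomb : pb p (b * c) = pb (pb p b) c := ctx.rmodP.smul_mul p b c
    rw [hcomb]
    exact this
  -- pb p (b*c) = 0 for all p, c
  have hx : ∀ (c : B) (p : P), pb p (b * c) = 0 := by
    intro c p
    apply hPr
    intro b'
    set x := pb p (b * c) with hxdef
    let φ : B →+ P := AddMonoidHom.mk' (fun b'' => pb x b'') (ctx.rmodP.smul_add x)
    have : AddSubgroup.closure {y : B | ∃ (q : Q) (p' : P), y = br q p'} ≤ φ.ker := by
      rw [AddSubgroup.closure_le]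
      rintro y ⟨q, p', rfl⟩
      show pb x (br q p') = 0
      rw [ctx.assoc1, key c q p, ap0]
    exact this (ctx.sur_br b')
  -- b * c = 0 for all c
  have bc0 : ∀ c : B, b * c = 0 := by
    intro c
    apply hBl
    intro b'
    show b' * (b * c) = 0
    let ψ : B →+ B := AddMonoidHom.mulRight (b * c)
    have : AddSubgroup.closure {y : B | ∃ (q : Q) (p' : P), y = br q p'} ≤ ψ.ker := by
      rw [AddSubgroup.closure_le]
      rintro y ⟨q, p', rfl⟩
      show br q p' * (b * c) = 0
      rw [← ctx.br_linr, hx c p', br0]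
    exact this (ctx.sur_br b')
  exact hBr b bc0
end

section
/- Let A be an idempotent graded ring and M, N unital graded left A-modules. Then for each σ ∈ Γ, the group HOM_A(M,N)_σ of graded homomorphisms of degree σ coincides with Hom of degree-preserving homomorphisms M → N(σ) and with degree-preserving homomorphisms M(σ⁻¹) → N, and HOM_A(M,N) decomposes as the direct sum ⊕_{σ∈Γ} HOM_A(M,N)_σ of abelian groups. -/
/-!
Common infrastructure: non-unital (graded) rings, non-unital graded modules
(given by explicit action functions), graded homomorphisms of all degrees,
traces, torsion submodules, balanced tensor products, and graded Morita
contexts, following Dokuchaev–Simón, "Graded Equivalence for Graded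
Idempotent Rings".
-/

open DirectSum

universe u v

theorem IsLMod.smul_zero' {A M : Type*} [NonUnitalRing A] [AddCommGroup M]
    {s : A → M → M} (h : IsLMod A M s) (a : A) : s a 0 = 0 := by
  have h0 := h.smul_add a 0 0
  rw [add_zero] at h0
  exact left_eq_add.mp h0

theorem IsLMod.smul_neg' {A M : Type*} [NonUnitalRing A] [AddCommGroup M]
    {s : A → M → M} (h : IsLMod A M s) (a : A) (m : M) : s a (-m) = - s a m := by
  have h1 := h.smul_add a m (-m)
  rw [add_neg_cancel, h.smul_zero'] at h1
  exact eq_neg_of_add_eq_zero_right h1.symm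

/-- `HOM_A(M,N)_σ`: the additive group of `A`-linear graded homomorphisms of
degree `σ`. -/
def HOMdeg {Γ A M N : Type*} [Group Γ] [NonUnitalRing A] [AddCommGroup M]
    [AddCommGroup N] (sM : A → M → M) (sN : A → N → N) (hN : IsLMod A N sN)
    (ℳ : Γ → AddSubgroup M) (𝒩 : Γ → AddSubgroup N) (σ : Γ) :
    AddSubgroup (M →+ N) where
  carrier := {f | IsLinL sM sN f ∧ IsDegL ℳ 𝒩 σ f}
  zero_mem' := by
    refine ⟨fun a m => ?_, fun τ m _ => ?_⟩
    · simp [hN.smul_zero']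
    · exact AddSubgroup.zero_mem _
  add_mem' := by
    rintro f g ⟨hf1, hf2⟩ ⟨hg1, hg2⟩
    refine ⟨fun a m => ?_, fun τ m hm => ?_⟩
    · simp only [AddMonoidHom.add_apply]
      rw [hf1 a m, hg1 a m, hN.smul_add]
    · exact AddSubgroup.add_mem _ (hf2 τ m hm) (hg2 τ m hm)
  neg_mem' := by
    rintro f ⟨hf1, hf2⟩
    refine ⟨fun a m => ?_, fun τ m hm => ?_⟩
    · simp only [AddMonoidHom.neg_apply]
      rw [hf1 a m, hN.smul_neg']
    · exact AddSubgroup.neg_mem _ (hf2 τ m hm)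

/-- For unital graded modules `M`, `N` over an idempotent
graded ring `A`: the graded homomorphisms of degree `σ` are exactly the
degree-preserving homomorphisms `M → N(σ)`, and exactly the degree-preserving
homomorphisms `M(σ⁻¹) → N`; moreover `HOM_A(M,N)` decomposes as the internal
direct sum `⊕_σ HOM_A(M,N)_σ` (the components generate `HOM` and form an
independent family of subgroups). -/
theorem HOM_decomposition
    {Γ : Type v} {A M N : Type u} [Group Γ] [DecidableEq Γ] [NonUnitalRing A]
    [AddCommGroup M] [AddCommGroup N]
    (𝒜 : Γ → AddSubgroup A) (ℳ : Γ → AddSubgroup M) (𝒩 : Γ → AddSubgroup N)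
    [DirectSum.Decomposition 𝒜] [DirectSum.Decomposition ℳ]
    [DirectSum.Decomposition 𝒩]
    (sM : A → M → M) (sN : A → N → N)
    (hGA : IsGRing 𝒜) (hIdem : IsIdem A)
    (hM : IsLMod A M sM) (hN : IsLMod A N sN)
    (hMg : IsGModL 𝒜 ℳ sM) (hNg : IsGModL 𝒜 𝒩 sN)
    (hMu : IsUnitalL sM) (hNu : IsUnitalL sN) :
    -- degree-σ homomorphisms = degree-preserving homomorphisms into `N(σ)`
    (∀ (σ : Γ) (f : M →+ N),
      IsDegL ℳ 𝒩 σ f ↔ IsDegL ℳ (fun τ => 𝒩 (τ * σ)) 1 f) ∧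
    -- degree-σ homomorphisms = degree-preserving homomorphisms from `M(σ⁻¹)`
    (∀ (σ : Γ) (f : M →+ N),
      IsDegL ℳ 𝒩 σ f ↔ IsDegL (fun τ => ℳ (τ * σ⁻¹)) 𝒩 1 f) ∧
    -- `HOM_A(M,N)` is the sum of its homogeneous components ...
    (HOML sM sN ℳ 𝒩 = ⨆ σ : Γ, HOMdeg sM sN hN ℳ 𝒩 σ) ∧
    -- ... and the sum is direct.
    iSupIndep (fun σ : Γ => HOMdeg sM sN hN ℳ 𝒩 σ) := by
  refine ⟨?_, ?_, ?_, ?_⟩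
  · intro σ f
    constructor
    · intro h τ m hm
      simpa using h τ m hm
    · intro h τ m hm
      simpa using h τ m hm
  · intro σ f
    constructor
    · intro h τ m hm
      rw [mul_one]
      have := h (τ * σ⁻¹) m hm
      rwa [mul_assoc, inv_mul_cancel, mul_one] at this
    · intro h τ m hm
      have hm' : m ∈ ℳ ((τ * σ) * σ⁻¹) := by
        rwa [mul_assoc, mul_inv_cancel, mul_one]
      have := h (τ * σ) m hm'
      rwa [mul_one] at this
  · apply le_antisymm
    · rw [HOML]
      rw [AddSubgroup.closure_le]
      rintro f ⟨hlin, σ, hdeg⟩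
      exact AddSubgroup.mem_iSup_of_mem σ ⟨hlin, hdeg⟩
    · refine iSup_le fun σ => ?_
      rintro f ⟨hlin, hdeg⟩
      exact AddSubgroup.subset_closure ⟨hlin, σ, hdeg⟩
  · -- independence
    intro σ
    rw [disjoint_iff_inf_le]
    rintro f ⟨hfσ, hfsup⟩
    -- homogeneous values lie in the complementary supremum
    have key : ∀ γ : Γ, ∀ m ∈ ℳ γ,
        f m ∈ ⨆ τ ∈ {τ : Γ | τ ≠ σ}, (𝒩 (γ * τ) : AddSubgroup N) := by
      intro γ m hm
      -- f belongs to the subgroup of maps with this property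
      let K : AddSubgroup (M →+ N) :=
        { carrier := {g | g m ∈ ⨆ τ ∈ {τ : Γ | τ ≠ σ}, (𝒩 (γ * τ) : AddSubgroup N)}
          zero_mem' := by
            simp only [Set.mem_setOf_eq, AddMonoidHom.zero_apply]
            exact AddSubgroup.zero_mem _
          add_mem' := by
            intro a b ha hb
            simp only [Set.mem_setOf_eq, AddMonoidHom.add_apply] at *
            exact AddSubgroup.add_mem _ ha hb
          neg_mem' := by
            intro a ha
            simp only [Set.mem_setOf_eq, AddMonoidHom.neg_apply] at *
            exact AddSubgroup.neg_mem _ ha }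
      have hK : (⨆ τ ∈ {τ : Γ | τ ≠ σ}, HOMdeg sM sN hN ℳ 𝒩 τ) ≤ K := by
        refine iSup_le fun τ => iSup_le fun hτ => ?_
        rintro g ⟨-, hgdeg⟩
        exact AddSubgroup.mem_iSup_of_mem τ (AddSubgroup.mem_iSup_of_mem hτ (hgdeg γ m hm))
      have : f ∈ K := hK (by simpa using hfsup)
      exact this
    -- independence of the grading of N
    have hNindep : iSupIndep 𝒩 :=
      (DirectSum.Decomposition.isInternal 𝒩).addSubgroup_iSupIndep
    have hzero : ∀ γ : Γ, ∀ m ∈ ℳ γ, f m = 0 := by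
      intro γ m hm
      have h1 : f m ∈ 𝒩 (γ * σ) := hfσ.2 γ m hm
      have hle : (⨆ τ ∈ {τ : Γ | τ ≠ σ}, (𝒩 (γ * τ) : AddSubgroup N)) ≤
          ⨆ ρ ∈ {ρ : Γ | ρ ≠ γ * σ}, (𝒩 ρ : AddSubgroup N) := by
        refine iSup₂_le fun τ hτ => le_iSup₂_of_le (γ * τ) ?_ le_rfl
        exact fun h => hτ (mul_left_cancel h)
      have h2 : f m ∈ ⨆ ρ ∈ {ρ : Γ | ρ ≠ γ * σ}, (𝒩 ρ : AddSubgroup N) :=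
        hle (key γ m hm)
      have hd := hNindep (γ * σ)
      rw [disjoint_iff_inf_le] at hd
      have : f m ∈ (⊥ : AddSubgroup N) := hd ⟨h1, h2⟩
      simpa using this
    -- conclude f = 0 using the decomposition of M
    have : f = 0 := by
      ext m
      classical
      have hdec := DirectSum.sum_support_decompose ℳ m
      rw [← hdec, map_sum]
      refine Finset.sum_eq_zero fun i _ => hzero i _ (SetLike.coe_mem _)
    simp [this]
end
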